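/- arXiv:2604.13126 — 13 statements merged into one kernel-verified Lean document; each statement's English description precedes it below -/
import Mathlib

section
/- A finite-dimensional evolution algebra over a field K is nil if and only if it is right nilpotent. -/
section

variable {K : Type*} [Field K] {E : Type*} [NonUnitalNonAssocRing E]
  [Module K E] [SMulCommClass K E E] [IsScalarTower K E E]

/-- Principal powers: `ppw x m = x^{<m+1>}`, i.e. `ppw x 0 = x` and
`x^{<k+1>} = x^{<k>} * x`. -/
def ppw (x : E) : ℕ → E
  | 0 => x
  | m + 1 => ppw x m * x

/-- The product of two submodules of a (non-unital, non-associative) algebra: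
the span of all products of an element of `A` by an element of `B`. -/
def pairMul (A B : Submodule K E) : Submodule K E :=
  Submodule.span K {z | ∃ x ∈ A, ∃ y ∈ B, z = x * y}

/-- Right principal powers of the algebra: `rpw K E m = E^{<m+1>}`, i.e.
`E^{<1>} = E` and `E^{<k+1>} = E^{<k>} E`. -/
def rpw (K : Type*) (E : Type*) [Field K] [NonUnitalNonAssocRing E]
    [Module K E] [SMulCommClass K E E] [IsScalarTower K E E] : ℕ → Submodule K E
  | 0 => ⊤
  | m + 1 => pairMul (rpw K E m) ⊤

namespace EvolNilAux

set_option linter.unusedSectionVars false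

/-- A `k`-periodic function of `ℕ` only depends on the residue mod `k`. -/
lemma per_mod {α : Type*} {k : ℕ} (hk : 0 < k) (v : ℕ → α)
    (hper : ∀ t, v (t + k) = v t) : ∀ a, v a = v (a % k) := by
  intro a
  induction a using Nat.strong_induction_on with
  | _ a ih =>
    rcases lt_or_ge a k with h | h
    · rw [Nat.mod_eq_of_lt h]
    · have h1 : v ((a - k) + k) = v (a - k) := hper (a - k)
      rw [Nat.sub_add_cancel h] at h1
      rw [h1, ih (a - k) (by omega), Nat.mod_eq_sub_mod h]

/-- If `s ≢ t+1 (mod k)` then there is `r` with `r + 1 < k` and `s + r ≡ t (mod k)`. -/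
lemma mod_helper {k : ℕ} (hk : 0 < k) {s t : ℕ} (h : s % k ≠ (t + 1) % k) :
    ∃ r, r + 1 < k ∧ (s + r) % k = t % k := by
  refine ⟨(t + k - s % k) % k, ?_, ?_⟩
  · have hr : (t + k - s % k) % k < k := Nat.mod_lt _ hk
    rcases Nat.lt_or_ge ((t + k - s % k) % k + 1) k with h1 | h1
    · exact h1
    have hr1 : (t + k - s % k) % k = k - 1 := by omega
    exfalso
    apply h
    have hsk : s % k < k := Nat.mod_lt _ hk
    have e1 : (s + (t + k - s % k) % k) % k = t % k := by
      rw [Nat.add_mod_mod]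
      have e2 : s + (t + k - s % k) = t + k + k * (s / k) := by
        have := Nat.div_add_mod s k
        omega
      rw [e2]
      simp [Nat.add_mul_mod_self_left, Nat.add_mod_right]
    rw [hr1] at e1
    rw [← Nat.mod_add_mod, ← e1, Nat.mod_add_mod]
    have : s + (k - 1) + 1 = s + k := by omega
    rw [this, Nat.add_mod_right]
  · rw [Nat.add_mod_mod]
    have e2 : s + (t + k - s % k) = t + k + k * (s / k) := by
      have := Nat.div_add_mod s k
      have : s % k < k := Nat.mod_lt _ hk
      omega
    rw [e2]
    simp [Nat.add_mul_mod_self_left, Nat.add_mod_right]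

variable {n : ℕ} (b : Module.Basis (Fin n) K E)

/-- The fundamental multiplication formula in an evolution algebra. -/
lemma mul_eq (hb : ∀ i j : Fin n, i ≠ j → b i * b j = 0) (x y : E) :
    x * y = ∑ j, (b.repr x j * b.repr y j) • (b j * b j) := by
  conv_lhs => rw [← b.sum_repr x, ← b.sum_repr y]
  rw [Finset.sum_mul_sum]
  refine Finset.sum_congr rfl fun i _ => ?_
  rw [Finset.sum_eq_single i]
  · rw [smul_mul_smul_comm]
  · intro j _ hj
    rw [smul_mul_smul_comm, hb i j fun h => hj h.symm, smul_zero]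
  · intro h; exact absurd (Finset.mem_univ i) h

/-- Structure constants of the evolution algebra. -/
noncomputable def sA (i j : Fin n) : K := b.repr (b i * b i) j

/-- Out-neighbours of a set of indices in the associated directed graph. -/
def nxt (s : Set (Fin n)) : Set (Fin n) := {j | ∃ i ∈ s, sA b i j ≠ 0}

/-- Iterated out-neighbourhoods of the full vertex set. -/
def Sk : ℕ → Set (Fin n)
  | 0 => Set.univ
  | k + 1 => nxt b (Sk k)

lemma mul_mem_span_sq (hb : ∀ i j : Fin n, i ≠ j → b i * b j = 0)
    {s : Set (Fin n)} {x : E} (hx : ∀ j, b.repr x j ≠ 0 → j ∈ s) (y : E) :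
    x * y ∈ Submodule.span K ((fun j => b j * b j) '' s) := by
  rw [mul_eq b hb]
  refine Submodule.sum_mem _ fun j _ => ?_
  by_cases h : b.repr x j = 0
  · rw [h, zero_mul, zero_smul]; exact Submodule.zero_mem _
  · exact Submodule.smul_mem _ _ (Submodule.subset_span ⟨j, hx j h, rfl⟩)

lemma sq_span_le (s : Set (Fin n)) :
    Submodule.span K ((fun j => b j * b j) '' s) ≤ Submodule.span K (b '' nxt b s) := by
  rw [Submodule.span_le]
  rintro _ ⟨i, hi, rfl⟩
  show b i * b i ∈ _
  rw [← b.sum_repr (b i * b i)]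
  refine Submodule.sum_mem _ fun j _ => ?_
  by_cases h : b.repr (b i * b i) j = 0
  · rw [h, zero_smul]; exact Submodule.zero_mem _
  · exact Submodule.smul_mem _ _ (Submodule.subset_span ⟨j, ⟨i, hi, h⟩, rfl⟩)

lemma rpw_le (hb : ∀ i j : Fin n, i ≠ j → b i * b j = 0) (k : ℕ) :
    rpw K E (k + 1) ≤ Submodule.span K ((fun j => b j * b j) '' Sk b k) := by
  induction k with
  | zero =>
    show pairMul (rpw K E 0) ⊤ ≤ _
    rw [pairMul, Submodule.span_le]
    rintro _ ⟨x, -, y, -, rfl⟩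
    exact mul_mem_span_sq b hb (fun j _ => Set.mem_univ j) y
  | succ k ih =>
    show pairMul (rpw K E (k + 1)) ⊤ ≤ _
    rw [pairMul, Submodule.span_le]
    rintro _ ⟨x, hx, y, -, rfl⟩
    have hx' : x ∈ Submodule.span K (b '' Sk b (k + 1)) :=
      (le_trans ih (sq_span_le b (Sk b k))) hx
    rw [Module.Basis.mem_span_image] at hx'
    refine mul_mem_span_sq b hb (fun j hj => hx' ?_) y
    simpa using hj

/-- Any element of `Sk b k` is the end of a walk of length `k`. -/
lemma exists_walk {k : ℕ} {j : Fin n} (hj : j ∈ Sk b k) :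
    ∃ v : ℕ → Fin n, v k = j ∧ ∀ t < k, sA b (v t) (v (t + 1)) ≠ 0 := by
  induction k generalizing j with
  | zero => exact ⟨fun _ => j, rfl, by omega⟩
  | succ k ih =>
    obtain ⟨i, hi, hij⟩ := hj
    obtain ⟨v, hv, hedge⟩ := ih hi
    refine ⟨fun t => if t = k + 1 then j else v t, by simp, ?_⟩
    intro t ht
    by_cases h : t = k
    · subst h
      simp only [Nat.succ_ne_self, if_neg, if_pos rfl]
      rw [if_neg (by omega), hv]
      exact hij
    · have h1 : t ≠ k + 1 := by omega
      have h2 : t + 1 ≠ k + 1 := by omega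
      simp only [if_neg h1, if_neg h2]
      exact hedge t (by omega)

/-- Existence of a closed walk of length `k`. -/
def IsCyc (k : ℕ) : Prop :=
  0 < k ∧ ∃ v : ℕ → Fin n,
    (∀ t, v (t + k) = v t) ∧ ∀ t, sA b (v t) (v (t + 1)) ≠ 0

/-- From a walk with a repeated vertex one gets a closed walk. -/
lemma cyc_of_walk {v : ℕ → Fin n} {i j : ℕ} (hij : i < j) (hv : v i = v j)
    (hedge : ∀ t < j, sA b (v t) (v (t + 1)) ≠ 0) : IsCyc b (j - i) := by
  set d := j - i with hd
  have hd0 : 0 < d := by omega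
  refine ⟨hd0, fun t => v (i + t % d), fun t => by
    show v (i + (t + d) % d) = v (i + t % d)
    rw [Nat.add_mod_right], ?_⟩
  intro t
  show sA b (v (i + t % d)) (v (i + (t + 1) % d)) ≠ 0
  set q := t % d with hq
  have hqd : q < d := Nat.mod_lt _ hd0
  have hsucc : (t + 1) % d = (q + 1) % d := by rw [hq, Nat.mod_add_mod]
  rcases Nat.lt_or_ge (q + 1) d with h | h
  · have : (t + 1) % d = q + 1 := by rw [hsucc, Nat.mod_eq_of_lt h]
    rw [this]
    have : i + (q + 1) = (i + q) + 1 := by omega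
    rw [this]
    exact hedge (i + q) (by omega)
  · have hq1 : q + 1 = d := by omega
    have : (t + 1) % d = 0 := by rw [hsucc, hq1, Nat.mod_self]
    rw [this]
    have e1 : i + q = j - 1 := by omega
    have e2 : (j - 1) + 1 = j := by omega
    have := hedge (j - 1) (by omega)
    rw [e2] at this
    rw [e1, show i + 0 = i by omega, hv]
    exact this

end EvolNilAux

open EvolNilAux in
/-- A finite-dimensional evolution algebra is nil iff it is right nilpotent. -/
theorem evolution_algebra_nil_iff_right_nilpotent
    {n : ℕ} (b : Module.Basis (Fin n) K E)
    (hb : ∀ i j : Fin n, i ≠ j → b i * b j = 0) :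
    (∀ x : E, ∃ m : ℕ, ppw x m = 0) ↔ (∃ m : ℕ, rpw K E m = ⊥) := by
  constructor
  · -- nil → right nilpotent, by contraposition
    intro hnil
    classical
    by_contra hnr
    push_neg at hnr
    -- `Sk b n` is nonempty
    have hSk : (Sk b n).Nonempty := by
      rcases Set.eq_empty_or_nonempty (Sk b n) with h | h
      · exfalso
        apply hnr (n + 1)
        have := rpw_le b hb n
        rw [h] at this
        simpa using le_bot_iff.mp (by simpa using this)
      · exact h
    obtain ⟨j0, hj0⟩ := hSk
    obtain ⟨v, -, hedge⟩ := exists_walk b hj0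
    -- pigeonhole: a repeated vertex among v 0, ..., v n
    obtain ⟨a, c, hac, hvac⟩ :=
      Fintype.exists_ne_map_eq_of_card_lt (fun t : Fin (n + 1) => v t) (by simp)
    -- get a closed walk
    have hcyc : ∃ k, IsCyc b k := by
      rcases lt_or_gt_of_ne hac with h | h
      · exact ⟨(c : ℕ) - a, cyc_of_walk b h hvac
          (fun t ht => hedge t (by omega))⟩
      · exact ⟨(a : ℕ) - c, cyc_of_walk b h hvac.symm
          (fun t ht => hedge t (by omega))⟩
    -- minimal closed walk
    set k := Nat.find hcyc with hkdef
    obtain ⟨hk0, w, hper, hedgew⟩ := Nat.find_spec hcyc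
    -- chord-freeness of the minimal closed walk
    have hchord : ∀ t s : ℕ, sA b (w t) (w s) ≠ 0 → s % k = (t + 1) % k := by
      intro t s hts
      by_contra h
      obtain ⟨r, hrk, hsr⟩ := mod_helper hk0 h
      refine Nat.find_min hcyc (show r + 1 < k from hrk)
        ⟨Nat.succ_pos r, fun m => w (s + m % (r + 1)), fun m => by
          show w (s + (m + (r + 1)) % (r + 1)) = w (s + m % (r + 1))
          rw [Nat.add_mod_right], ?_⟩
      intro m
      show sA b (w (s + m % (r + 1))) (w (s + (m + 1) % (r + 1))) ≠ 0
      set q := m % (r + 1) with hq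
      have hq1 : q < r + 1 := Nat.mod_lt _ (Nat.succ_pos r)
      have hsucc : (m + 1) % (r + 1) = (q + 1) % (r + 1) := by
        rw [hq, Nat.mod_add_mod]
      rcases Nat.lt_or_ge (q + 1) (r + 1) with hcase | hcase
      · have e : (m + 1) % (r + 1) = q + 1 := by rw [hsucc, Nat.mod_eq_of_lt hcase]
        rw [e]
        have : s + (q + 1) = (s + q) + 1 := by omega
        rw [this]
        exact hedgew (s + q)
      · have hq2 : q = r := by omega
        have e : (m + 1) % (r + 1) = 0 := by
          rw [hsucc, hq2]; simp
        rw [e, hq2, add_zero]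
        have hwt : w (s + r) = w t := by
          rw [per_mod hk0 w hper (s + r), per_mod hk0 w hper t, hsr]
        rw [hwt]
        exact hts
    -- congruent indices give the same vertex
    have hvc : ∀ t t' : ℕ, t % k = t' % k → w t = w t' := by
      intro t t' h
      rw [per_mod hk0 w hper t, per_mod hk0 w hper t', h]
    -- injectivity modulo k
    have hinj : ∀ t t' : ℕ, w t = w t' → t % k = t' % k := by
      intro t t' h
      have h1 := hedgew t
      rw [h] at h1
      have := hchord t' (t + 1) h1
      exact Nat.ModEq.add_right_cancel' 1 this
    -- the non-nil element
    set x : E := ∑ t ∈ Finset.range k, b (w t) with hx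
    have hreprx : ∀ j, b.repr x j =
        ∑ t ∈ Finset.range k, if w t = j then (1 : K) else 0 := by
      intro j
      rw [hx, map_sum]
      rw [Finsupp.finset_sum_apply]
      exact Finset.sum_congr rfl fun t _ => by
        rw [b.repr_self, Finsupp.single_apply]
    have hx1 : ∀ s : ℕ, b.repr x (w s) = 1 := by
      intro s
      rw [hreprx]
      rw [Finset.sum_eq_single_of_mem (s % k)
        (Finset.mem_range.mpr (Nat.mod_lt _ hk0))]
      · rw [if_pos (hvc (s % k) s (Nat.mod_mod_of_dvd s dvd_rfl))]
      · intro t ht hne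
        rw [if_neg]
        intro h
        have h2 := hinj t s h
        rw [Nat.mod_eq_of_lt (Finset.mem_range.mp ht)] at h2
        exact hne h2
    have hx0 : ∀ j, b.repr x j ≠ 0 → ∃ t, w t = j := by
      intro j hj
      by_contra h
      push_neg at h
      apply hj
      rw [hreprx]
      exact Finset.sum_eq_zero fun t _ => if_neg (h t)
    -- key: all principal powers of x have nonzero coordinates along the cycle
    have hkey : ∀ m (s : ℕ), b.repr (ppw x m) (w s) ≠ 0 := by
      intro m
      induction m with
      | zero =>
        intro s
        rw [show ppw x 0 = x from rfl, hx1]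
        exact one_ne_zero
      | succ m ih =>
        intro s
        rw [show ppw x (m + 1) = ppw x m * x from rfl, mul_eq b hb, map_sum,
          Finsupp.finset_sum_apply]
        set t₀ := (s + k - 1) % k with ht₀
        have ht₀k : t₀ < k := Nat.mod_lt _ hk0
        have ht₀s : (t₀ + 1) % k = s % k := by
          rw [ht₀, Nat.mod_add_mod]
          have e : s + k - 1 + 1 = s + k := by omega
          rw [e, Nat.add_mod_right]
        have hterm : ∀ j : Fin n,
            b.repr ((b.repr (ppw x m) j * b.repr x j) • (b j * b j)) (w s)
              = (b.repr (ppw x m) j * b.repr x j) * sA b j (w s) := by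
          intro j
          rw [map_smul, Finsupp.smul_apply, smul_eq_mul]
          rfl
        rw [Finset.sum_congr rfl fun j _ => hterm j]
        rw [Finset.sum_eq_single (w t₀)]
        · rw [hx1 t₀]
          have hws : w (t₀ + 1) = w s := hvc _ _ ht₀s
          refine mul_ne_zero (by rw [mul_one]; exact ih t₀) ?_
          rw [← hws]
          exact hedgew t₀
        · intro j _ hj
          by_cases hxj : b.repr x j = 0
          · rw [hxj, mul_zero, zero_mul]
          · obtain ⟨t, ht⟩ := hx0 j hxj
            by_cases ha : sA b j (w s) = 0
            · rw [ha, mul_zero]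
            · exfalso
              apply hj
              rw [← ht] at ha ⊢
              have h1 : s % k = (t + 1) % k := hchord t s ha
              have h2 : (t + 1) % k = (t₀ + 1) % k := h1.symm.trans ht₀s.symm
              exact hvc t t₀ (Nat.ModEq.add_right_cancel' 1 h2)
        · intro h
          exact absurd (Finset.mem_univ _) h
    obtain ⟨m, hm⟩ := hnil x
    apply hkey m 0
    rw [hm]
    simp
  · -- right nilpotent → nil
    rintro ⟨m, hm⟩ x
    refine ⟨m, ?_⟩
    have : ∀ m, ppw x m ∈ rpw K E m := by
      intro m
      induction m with
      | zero => exact Submodule.mem_top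
      | succ m ih =>
        exact Submodule.subset_span ⟨ppw x m, ih, x, Submodule.mem_top, rfl⟩
    have := this m
    rw [hm] at this
    simpa using this

end
end

section
/- An n-dimensional evolution algebra E with natural basis {e_1,...,e_n} and structural constants p_{ik} satisfying p_{ik} = 0 for all k ≤ i (strictly upper-triangular structure matrix) has index of nilpotency equal to 2^{n-1}+1 if and only if p_{12} p_{23} ⋯ p_{(n-1)n} ≠ 0. -/
set_option linter.unusedSectionVars false


section

variable {K : Type*} [Field K] {E : Type*} [NonUnitalNonAssocRing E]
  [Module K E] [SMulCommClass K E E] [IsScalarTower K E E]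

/-- Plenary-type powers of the algebra: `apow K E 1 = E` and
`apow K E k = Σ_{i=1}^{k-1} E^i E^{k-i}` (and, by convention, `apow K E 0 = ⊥`). -/
def apow (K : Type*) (E : Type*) [Field K] [NonUnitalNonAssocRing E]
    [Module K E] [SMulCommClass K E E] [IsScalarTower K E E] : ℕ → Submodule K E
  | 0 => ⊥
  | 1 => ⊤
  | (k + 2) =>
      (Finset.Ico 1 (k + 2)).attach.sup
        (fun i => pairMul (apow K E i.1) (apow K E (k + 2 - i.1)))
decreasing_by
  all_goals (obtain ⟨i, hi⟩ := i; rw [Finset.mem_Ico] at hi; simp; omega)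

namespace EvolutionAux

lemma mul_mem_pairMul {A B : Submodule K E} {x y : E} (hx : x ∈ A) (hy : y ∈ B) :
    x * y ∈ pairMul A B :=
  Submodule.subset_span ⟨x, hx, y, hy, rfl⟩

lemma pairMul_le {A B C : Submodule K E} (h : ∀ x ∈ A, ∀ y ∈ B, x * y ∈ C) :
    pairMul A B ≤ C := by
  rw [pairMul, Submodule.span_le]
  rintro z ⟨x, hx, y, hy, rfl⟩
  exact h x hx y hy

lemma pairMul_mono {A A' B B' : Submodule K E} (hA : A ≤ A') (hB : B ≤ B') :
    pairMul A B ≤ pairMul A' B' :=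
  pairMul_le fun _ hx _ hy => mul_mem_pairMul (hA hx) (hB hy)

variable {n : ℕ} (b : Module.Basis (Fin n) K E)

/-- Span of the basis vectors of index `≥ m`. -/
def Wspan (m : ℕ) : Submodule K E := Submodule.span K (b '' {i : Fin n | m ≤ i.1})

lemma mem_Wspan_iff {m : ℕ} {x : E} :
    x ∈ Wspan b m ↔ ∀ i : Fin n, (i : ℕ) < m → b.repr x i = 0 := by
  rw [Wspan, Module.Basis.mem_span_image]
  constructor
  · intro h i hi
    by_contra h0
    have := h (Finsupp.mem_support_iff.2 h0)
    simp only [Set.mem_setOf_eq] at this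
    omega
  · intro h i hi
    by_contra h0
    simp only [Set.mem_setOf_eq, not_le] at h0
    exact (Finsupp.mem_support_iff.1 hi) (h i h0)

lemma Wspan_zero : Wspan b 0 = ⊤ := by
  have : {i : Fin n | 0 ≤ i.1} = Set.univ := by ext; simp
  rw [Wspan, this, Set.image_univ, b.span_eq]

lemma Wspan_anti {m m' : ℕ} (h : m ≤ m') : Wspan b m' ≤ Wspan b m :=
  Submodule.span_mono (Set.image_mono fun i hi => by simp only [Set.mem_setOf_eq] at *; omega)

lemma Wspan_bot : Wspan b n = ⊥ := by
  have : {i : Fin n | n ≤ i.1} = ∅ := by ext i; simp [i.isLt.not_ge]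
  rw [Wspan, this, Set.image_empty, Submodule.span_empty]

lemma mul_expand (hb : ∀ i j : Fin n, i ≠ j → b i * b j = 0) (x y : E) :
    x * y = ∑ i : Fin n, (b.repr x i * b.repr y i) • (b i * b i) := by
  have hx := b.sum_repr x
  have hy := b.sum_repr y
  calc x * y = (∑ i : Fin n, b.repr x i • b i) * (∑ j : Fin n, b.repr y j • b j) := by
        rw [hx, hy]
    _ = ∑ i : Fin n, ∑ j : Fin n, (b.repr x i * b.repr y j) • (b i * b j) := by
        rw [Finset.sum_mul]
        refine Finset.sum_congr rfl fun i _ => ?_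
        rw [Finset.mul_sum]
        refine Finset.sum_congr rfl fun j _ => ?_
        rw [smul_mul_assoc, mul_smul_comm, smul_smul]
    _ = ∑ i : Fin n, (b.repr x i * b.repr y i) • (b i * b i) := by
        refine Finset.sum_congr rfl fun i _ => ?_
        refine Finset.sum_eq_single i (fun j _ hj => ?_) (by simp)
        rw [hb i j (Ne.symm hj), smul_zero]

variable (p : Fin n → Fin n → K)

lemma repr_sq (hp : ∀ i : Fin n, b i * b i = ∑ k, p i k • b k) (i t : Fin n) :
    b.repr (b i * b i) t = p i t := by
  rw [hp i]
  simp [Finsupp.single_apply]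

lemma sq_mem_Wspan (hp : ∀ i : Fin n, b i * b i = ∑ k, p i k • b k)
    (htri : ∀ i k : Fin n, (k : ℕ) ≤ (i : ℕ) → p i k = 0) (i : Fin n) :
    b i * b i ∈ Wspan b ((i : ℕ) + 1) := by
  rw [mem_Wspan_iff]
  intro t ht
  rw [repr_sq b p hp]
  exact htri i t (by omega)

lemma mul_mem_Wspan (hb : ∀ i j : Fin n, i ≠ j → b i * b j = 0)
    {a c m : ℕ} {x y : E} (hx : x ∈ Wspan b a) (hy : y ∈ Wspan b c)
    (hsq : ∀ i : Fin n, a ≤ (i : ℕ) → c ≤ (i : ℕ) → b i * b i ∈ Wspan b m) :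
    x * y ∈ Wspan b m := by
  rw [mul_expand b hb x y]
  refine Submodule.sum_mem _ fun i _ => ?_
  by_cases ha : a ≤ (i : ℕ)
  · by_cases hc : c ≤ (i : ℕ)
    · exact Submodule.smul_mem _ _ (hsq i ha hc)
    · rw [mem_Wspan_iff] at hy
      rw [hy i (by omega), mul_zero, zero_smul]
      exact Submodule.zero_mem _
  · rw [mem_Wspan_iff] at hx
    rw [hx i (by omega), zero_mul, zero_smul]
    exact Submodule.zero_mem _

lemma pairMul_Wspan_le (hb : ∀ i j : Fin n, i ≠ j → b i * b j = 0)
    (hp : ∀ i : Fin n, b i * b i = ∑ k, p i k • b k)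
    (htri : ∀ i k : Fin n, (k : ℕ) ≤ (i : ℕ) → p i k = 0) (a c : ℕ) :
    pairMul (Wspan b a) (Wspan b c) ≤ Wspan b (max a c + 1) :=
  pairMul_le fun _ hx _ hy => mul_mem_Wspan b hb hx hy fun i ha hc =>
    Wspan_anti b (by omega) (sq_mem_Wspan b p hp htri i)

lemma pairMul_Wspan_le_gap (hb : ∀ i j : Fin n, i ≠ j → b i * b j = 0)
    (hp : ∀ i : Fin n, b i * b i = ∑ k, p i k • b k)
    (htri : ∀ i k : Fin n, (k : ℕ) ≤ (i : ℕ) → p i k = 0)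
    {t : ℕ} (ht : t + 1 < n)
    (hpt : p ⟨t, by omega⟩ ⟨t + 1, ht⟩ = 0)
    {a c : ℕ} (hj : t ≤ max a c) :
    pairMul (Wspan b a) (Wspan b c) ≤ Wspan b (t + 2) := by
  refine pairMul_le fun x hx y hy => mul_mem_Wspan b hb hx hy fun i ha hc => ?_
  rcases eq_or_lt_of_le (show t ≤ (i : ℕ) by omega) with h | h
  · rw [mem_Wspan_iff]
    intro s hs
    rw [repr_sq b p hp]
    rcases Nat.lt_or_ge (s : ℕ) (t + 1) with h' | h'
    · exact htri i s (by omega)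
    · have hs' : s = (⟨t + 1, ht⟩ : Fin n) := by
        apply Fin.ext; simp; omega
      have hi' : i = (⟨t, by omega⟩ : Fin n) := by
        apply Fin.ext; simp; omega
      rw [hs', hi', hpt]
  · exact Wspan_anti b (by omega) (sq_mem_Wspan b p hp htri i)

/-- The universal upper bound: `apow k ≤ W m` once `k > 2^{m-1}`. -/
lemma apow_le_Wspan (hb : ∀ i j : Fin n, i ≠ j → b i * b j = 0)
    (hp : ∀ i : Fin n, b i * b i = ∑ k, p i k • b k)
    (htri : ∀ i k : Fin n, (k : ℕ) ≤ (i : ℕ) → p i k = 0) :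
    ∀ m k : ℕ, 2 ^ m < 2 * k → apow K E k ≤ Wspan b m := by
  intro m
  induction m with
  | zero => intro k _; rw [Wspan_zero]; exact le_top
  | succ m ih =>
    intro k hk
    match k with
    | 0 => rw [apow]; exact bot_le
    | 1 => exfalso; have : (1:ℕ) ≤ 2 ^ m := Nat.one_le_two_pow; have := pow_succ 2 m; omega
    | (r + 2) =>
      rw [apow]
      refine Finset.sup_le fun ⟨i, hi⟩ _ => ?_
      rw [Finset.mem_Ico] at hi
      have hsplit : 2 ^ m < 2 * i ∨ 2 ^ m < 2 * (r + 2 - i) := by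
        by_contra hc
        push_neg at hc
        have := pow_succ 2 m
        omega
      rcases hsplit with h | h
      · calc pairMul (apow K E i) (apow K E (r + 2 - i))
            ≤ pairMul (Wspan b m) (Wspan b 0) := by
              refine pairMul_mono (ih i h) ?_
              rw [Wspan_zero]; exact le_top
          _ ≤ Wspan b (max m 0 + 1) := pairMul_Wspan_le b p hb hp htri m 0
          _ = Wspan b (m + 1) := by rw [Nat.max_zero]
      · calc pairMul (apow K E i) (apow K E (r + 2 - i))
            ≤ pairMul (Wspan b 0) (Wspan b m) := by
              refine pairMul_mono ?_ (ih _ h)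
              rw [Wspan_zero]; exact le_top
          _ ≤ Wspan b (max 0 m + 1) := pairMul_Wspan_le b p hb hp htri 0 m
          _ = Wspan b (m + 1) := by rw [Nat.zero_max]

/-- The improved upper bound when the superdiagonal has a zero entry. -/
lemma apow_le_Wspan_gap (hb : ∀ i j : Fin n, i ≠ j → b i * b j = 0)
    (hp : ∀ i : Fin n, b i * b i = ∑ k, p i k • b k)
    (htri : ∀ i k : Fin n, (k : ℕ) ≤ (i : ℕ) → p i k = 0)
    {t : ℕ} (ht : t + 1 < n) (hpt : p ⟨t, by omega⟩ ⟨t + 1, ht⟩ = 0) :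
    ∀ m, t + 2 ≤ m → ∀ k : ℕ, 2 ^ (m - 1) < 2 * k → apow K E k ≤ Wspan b m := by
  intro m
  induction m with
  | zero => omega
  | succ m ih =>
    intro hm k hk
    have hm1 : m + 1 - 1 = m := by omega
    rw [hm1] at hk
    match k with
    | 0 => rw [apow]; exact bot_le
    | 1 =>
      exfalso
      have h2 : (2:ℕ) ≤ 2 ^ m := by
        calc (2:ℕ) = 2 ^ 1 := rfl
          _ ≤ 2 ^ m := Nat.pow_le_pow_right (by norm_num) (by omega)
      omega
    | (r + 2) =>
      rw [apow]
      refine Finset.sup_le fun ⟨i, hi⟩ _ => ?_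
      rw [Finset.mem_Ico] at hi
      have hsplit : 2 ^ (m - 1) < 2 * i ∨ 2 ^ (m - 1) < 2 * (r + 2 - i) := by
        by_contra hc
        push_neg at hc
        have h2 : 2 ^ (m - 1) * 2 = 2 ^ m := by
          rw [← pow_succ]; congr 1; omega
        omega
      rcases eq_or_lt_of_le hm with hm2 | hm2
      · -- base case: m = t + 1  and we use the universal bound for the factors
        have hmt : m = t + 1 := by omega
        subst hmt
        have hsplit' : 2 ^ t < 2 * i ∨ 2 ^ t < 2 * (r + 2 - i) := by
          simpa using hsplit
        rcases hsplit' with h | h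
        · calc pairMul (apow K E i) (apow K E (r + 2 - i))
              ≤ pairMul (Wspan b t) (Wspan b 0) := by
                refine pairMul_mono (apow_le_Wspan b p hb hp htri t i h) ?_
                rw [Wspan_zero]; exact le_top
            _ ≤ Wspan b (t + 2) := pairMul_Wspan_le_gap b p hb hp htri ht hpt (by omega)
        · calc pairMul (apow K E i) (apow K E (r + 2 - i))
              ≤ pairMul (Wspan b 0) (Wspan b t) := by
                refine pairMul_mono ?_ (apow_le_Wspan b p hb hp htri t _ h)
                rw [Wspan_zero]; exact le_top
            _ ≤ Wspan b (t + 2) := pairMul_Wspan_le_gap b p hb hp htri ht hpt (by omega)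
      · have hm' : t + 2 ≤ m := by omega
        have hmm : m - 1 + 1 = m := by omega
        rcases hsplit with h | h
        · calc pairMul (apow K E i) (apow K E (r + 2 - i))
              ≤ pairMul (Wspan b m) (Wspan b 0) := by
                refine pairMul_mono (ih hm' i (by omega)) ?_
                rw [Wspan_zero]; exact le_top
            _ ≤ Wspan b (max m 0 + 1) := pairMul_Wspan_le b p hb hp htri m 0
            _ = Wspan b (m + 1) := by rw [Nat.max_zero]
        · calc pairMul (apow K E i) (apow K E (r + 2 - i))
              ≤ pairMul (Wspan b 0) (Wspan b m) := by
                refine pairMul_mono ?_ (ih hm' _ (by omega))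
                rw [Wspan_zero]; exact le_top
            _ ≤ Wspan b (max 0 m + 1) := pairMul_Wspan_le b p hb hp htri 0 m
            _ = Wspan b (m + 1) := by rw [Nat.zero_max]


lemma le_apow_of {k i : ℕ} (h1 : 1 ≤ i) (h2 : i < k + 2) :
    pairMul (apow K E i) (apow K E (k + 2 - i)) ≤ apow K E (k + 2) := by
  rw [apow]
  have hb : (⟨i, Finset.mem_Ico.2 ⟨h1, h2⟩⟩ : {x // x ∈ Finset.Ico 1 (k + 2)}) ∈
      (Finset.Ico 1 (k + 2)).attach := Finset.mem_attach _ _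
  have := Finset.le_sup (α := Submodule K E) hb
    (f := fun j : {x // x ∈ Finset.Ico 1 (k + 2)} => pairMul (apow K E j.1) (apow K E (k + 2 - j.1)))
  exact this

lemma apow_succ_le : ∀ k : ℕ, 1 ≤ k → apow K E (k + 1) ≤ apow K E k := by
  intro k
  induction k using Nat.strong_induction_on with
  | _ k ih =>
    intro hk
    match k, hk with
    | 1, _ =>
      rw [show apow K E 1 = ⊤ from by rw [apow]]
      exact le_top
    | (r + 2), _ =>
      have e : r + 2 + 1 = r + 1 + 2 := rfl
      rw [e, apow]
      refine Finset.sup_le fun ⟨i, hi⟩ _ => ?_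
      rw [Finset.mem_Ico] at hi
      by_cases hir : i ≤ r + 1
      · have h1 : r + 1 + 2 - i = (r + 2 - i) + 1 := by omega
        have hle : apow K E (r + 1 + 2 - i) ≤ apow K E (r + 2 - i) := by
          rw [h1]; exact ih (r + 2 - i) (by omega) (by omega)
        exact le_trans (pairMul_mono le_rfl hle) (le_apow_of (k := r) (i := i) hi.1 (by omega))
      · have hieq : i = r + 2 := by omega
        subst hieq
        have h2 : r + 1 + 2 - (r + 2) = 1 := by omega
        rw [h2]
        have hle : apow K E (r + 2) ≤ apow K E (r + 1) := ih (r + 1) (by omega) (by omega)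
        have h4 := le_apow_of (K := K) (E := E) (k := r) (i := r + 1) (by omega) (by omega)
        have h3 : r + 2 - (r + 1) = 1 := by omega
        rw [h3] at h4
        exact le_trans (pairMul_mono hle le_rfl) h4

lemma apow_anti {a c : ℕ} (ha : 1 ≤ a) (hac : a ≤ c) : apow K E c ≤ apow K E a := by
  induction c, hac using Nat.le_induction with
  | base => exact le_rfl
  | succ c hac ih => exact le_trans (apow_succ_le c (by omega)) ih

/-- plenary squares of an element -/
def csq (x : E) : ℕ → E
  | 0 => x
  | (k + 1) => csq x k * csq x k

lemma csq_mem_apow (x : E) : ∀ k : ℕ, csq x k ∈ apow K E (2 ^ k) := by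
  intro k
  induction k with
  | zero =>
    rw [pow_zero, show apow K E 1 = ⊤ from by rw [apow]]
    exact Submodule.mem_top
  | succ k ihk =>
    have hp1 : 1 ≤ 2 ^ k := Nat.one_le_two_pow
    have hp2 : 2 ^ (k + 1) = 2 ^ k + 2 ^ k := by rw [pow_succ]; omega
    have h4 := le_apow_of (K := K) (E := E) (k := 2 ^ (k + 1) - 2) (i := 2 ^ k)
      (by omega) (by omega)
    have e2 : 2 ^ (k + 1) - 2 + 2 - 2 ^ k = 2 ^ k := by omega
    have e : 2 ^ (k + 1) - 2 + 2 = 2 ^ (k + 1) := by omega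
    rw [e2, e] at h4
    exact h4 (mul_mem_pairMul ihk ihk)


lemma csq_spec (hn : 0 < n) (hb : ∀ i j : Fin n, i ≠ j → b i * b j = 0)
    (hp : ∀ i : Fin n, b i * b i = ∑ k, p i k • b k)
    (htri : ∀ i k : Fin n, (k : ℕ) ≤ (i : ℕ) → p i k = 0)
    (hne : ∀ t : ℕ, (ht : t + 1 < n) → p ⟨t, by omega⟩ ⟨t + 1, ht⟩ ≠ 0) :
    ∀ k : ℕ, (hk : k < n) →
      csq (b ⟨0, hn⟩) k ∈ Wspan b k ∧ b.repr (csq (b ⟨0, hn⟩) k) ⟨k, hk⟩ ≠ 0 := by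
  intro k
  induction k with
  | zero =>
    intro hk
    constructor
    · rw [Wspan_zero]; exact Submodule.mem_top
    · show b.repr (b ⟨0, hn⟩) ⟨0, hk⟩ ≠ 0
      rw [b.repr_self, Finsupp.single_apply]
      simp
  | succ k ihk =>
    intro hk
    obtain ⟨hW, hr⟩ := ihk (by omega)
    set x := csq (b ⟨0, hn⟩) k with hx
    have hmul : csq (b ⟨0, hn⟩) (k + 1) = x * x := rfl
    constructor
    · rw [hmul]
      exact mul_mem_Wspan b hb hW hW fun i hi _ =>
        Wspan_anti b (by omega) (sq_mem_Wspan b p hp htri i)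
    · rw [hmul, mul_expand b hb x x, map_sum]
      rw [Finsupp.finset_sum_apply]
      have hterm : ∀ i : Fin n,
          b.repr ((b.repr x i * b.repr x i) • (b i * b i)) ⟨k + 1, hk⟩ =
            (b.repr x i * b.repr x i) * p i ⟨k + 1, hk⟩ := by
        intro i
        rw [map_smul, Finsupp.smul_apply, repr_sq b p hp, smul_eq_mul]
      rw [Finset.sum_congr rfl fun i _ => hterm i]
      rw [Finset.sum_eq_single (⟨k, by omega⟩ : Fin n)]
      · exact mul_ne_zero (mul_ne_zero hr hr) (hne k hk)
      · intro j _ hj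
        rcases Nat.lt_or_ge (j : ℕ) k with h | h
        · rw [mem_Wspan_iff] at hW
          rw [hW j h, mul_zero, zero_mul]
        · have hj' : k + 1 ≤ (j : ℕ) := by
            rcases Nat.eq_or_lt_of_le h with h' | h'
            · exact absurd (Fin.ext h'.symm) hj
            · omega
          rw [htri j ⟨k + 1, hk⟩ hj', mul_zero]
      · intro h
        exact absurd (Finset.mem_univ _) h

end EvolutionAux

open EvolutionAux

/-- An `n`-dimensional evolution algebra whose structure matrix is strictly
upper triangular has index of nilpotency `2^{n-1} + 1` if and only if
`p_{12} p_{23} ⋯ p_{(n-1)n} ≠ 0`. -/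
theorem evolution_algebra_max_nilindex_iff
    {n : ℕ} (hn : 0 < n) (b : Module.Basis (Fin n) K E)
    (hb : ∀ i j : Fin n, i ≠ j → b i * b j = 0)
    (p : Fin n → Fin n → K)
    (hp : ∀ i : Fin n, b i * b i = ∑ k, p i k • b k)
    (htri : ∀ i k : Fin n, (k : ℕ) ≤ (i : ℕ) → p i k = 0) :
    IsLeast {m : ℕ | 0 < m ∧ apow K E m = ⊥} (2 ^ (n - 1) + 1) ↔
      (∏ i : Fin (n - 1),
        p ⟨i.1, by have := i.isLt; omega⟩ ⟨i.1 + 1, by have := i.isLt; omega⟩) ≠ 0 := by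
  have hpow : 2 ^ (n - 1) * 2 = 2 ^ n := by
    rw [← pow_succ]; congr 1; omega
  have h1le : (1:ℕ) ≤ 2 ^ (n - 1) := Nat.one_le_two_pow
  -- unconditional membership
  have hmem : apow K E (2 ^ (n - 1) + 1) = ⊥ := by
    have := apow_le_Wspan b p hb hp htri n (2 ^ (n - 1) + 1) (by omega)
    rw [Wspan_bot] at this
    exact le_bot_iff.1 this
  constructor
  · -- index is max ⇒ product nonzero
    intro hL
    intro hprod
    obtain ⟨j, _, hj⟩ := Finset.prod_eq_zero_iff.1 hprod
    have ht : (j : ℕ) + 1 < n := by have := j.isLt; omega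
    have hn2 : 2 ≤ n := by omega
    have hpt : p ⟨(j : ℕ), by omega⟩ ⟨(j : ℕ) + 1, ht⟩ = 0 := hj
    have hpow2 : 2 ^ (n - 2) * 2 = 2 ^ (n - 1) := by
      rw [← pow_succ]; congr 1; omega
    have h1le2 : (1:ℕ) ≤ 2 ^ (n - 2) := Nat.one_le_two_pow
    have hbot : apow K E (2 ^ (n - 2) + 1) = ⊥ := by
      have := apow_le_Wspan_gap b p hb hp htri ht hpt n (by omega)
        (2 ^ (n - 2) + 1) (by omega)
      rw [Wspan_bot] at this
      exact le_bot_iff.1 this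
    have := hL.2 ⟨by omega, hbot⟩
    omega
  · -- product nonzero ⇒ index is max
    intro hprod
    have hne : ∀ t : ℕ, (ht : t + 1 < n) → p ⟨t, by omega⟩ ⟨t + 1, ht⟩ ≠ 0 := by
      intro t ht
      have := Finset.prod_ne_zero_iff.1 hprod ⟨t, by omega⟩ (Finset.mem_univ _)
      exact this
    constructor
    · exact ⟨by omega, hmem⟩
    · rintro m ⟨hm0, hmbot⟩
      by_contra hlt
      push_neg at hlt
      have hm : m ≤ 2 ^ (n - 1) := by omega
      have hle : apow K E (2 ^ (n - 1)) ≤ apow K E m := apow_anti hm0 hm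
      rw [hmbot, le_bot_iff] at hle
      obtain ⟨_, hr⟩ := csq_spec b p hn hb hp htri hne (n - 1) (by omega)
      have hmem2 : csq (b ⟨0, hn⟩) (n - 1) ∈ apow K E (2 ^ (n - 1)) :=
        csq_mem_apow _ _
      rw [hle, Submodule.mem_bot] at hmem2
      rw [hmem2] at hr
      simp at hr


end
end

section
/- The maximum possible index of nilpotency of an n-dimensional nilpotent evolution algebra is 2^{n-1}+1. -/
/-- The concrete evolution algebra on `Fin n → ℂ` with structure matrix `p`:
the standard basis is a natural basis and `e_i * e_i = ∑ k, p i k • e_k`. -/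
def EvAlg {n : ℕ} (_p : Fin n → Fin n → ℂ) : Type := Fin n → ℂ

namespace EvAlg

variable {n : ℕ} (p : Fin n → Fin n → ℂ)

noncomputable instance : AddCommGroup (EvAlg p) := Pi.addCommGroup
noncomputable instance : Module ℂ (EvAlg p) := Pi.module _ _ _

noncomputable instance : Mul (EvAlg p) :=
  ⟨fun x y k => ∑ i, x i * y i * p i k⟩

theorem mul_def (x y : EvAlg p) (k : Fin n) : (x * y) k = ∑ i, x i * y i * p i k := rfl

noncomputable instance : NonUnitalNonAssocRing (EvAlg p) where
  left_distrib x y z := by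
    funext k
    show ∑ i, x i * (y i + z i) * p i k = (fun k => _) k
    show ∑ i, x i * (y i + z i) * p i k
        = (∑ i, x i * y i * p i k) + ∑ i, x i * z i * p i k
    rw [← Finset.sum_add_distrib]
    exact Finset.sum_congr rfl fun i _ => by ring
  right_distrib x y z := by
    funext k
    show ∑ i, (x i + y i) * z i * p i k
        = (∑ i, x i * z i * p i k) + ∑ i, y i * z i * p i k
    rw [← Finset.sum_add_distrib]
    exact Finset.sum_congr rfl fun i _ => by ring
  zero_mul x := by
    funext k
    show ∑ i, (0 : ℂ) * x i * p i k = 0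
    simp
  mul_zero x := by
    funext k
    show ∑ i, x i * (0 : ℂ) * p i k = 0
    simp

instance : SMulCommClass ℂ (EvAlg p) (EvAlg p) where
  smul_comm a x y := by
    show a • (x * y) = x * (a • y)
    funext k
    show a * (∑ i, x i * y i * p i k) = ∑ i, x i * (a * y i) * p i k
    rw [Finset.mul_sum]
    exact Finset.sum_congr rfl fun i _ => by ring

instance : IsScalarTower ℂ (EvAlg p) (EvAlg p) where
  smul_assoc a x y := by
    show (a • x) * y = a • (x * y)
    funext k
    show ∑ i, (a * x i) * y i * p i k = a * ∑ i, x i * y i * p i k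
    rw [Finset.mul_sum]
    exact Finset.sum_congr rfl fun i _ => by ring

end EvAlg

set_option linter.unusedSectionVars false
section
variable {K : Type*} [Field K] {E : Type*} [NonUnitalNonAssocRing E]
  [Module K E] [SMulCommClass K E E] [IsScalarTower K E E]

theorem apow_zero : apow K E 0 = ⊥ := by rw [apow]
theorem apow_one : apow K E 1 = ⊤ := by rw [apow]
theorem apow_add_two (k : ℕ) : apow K E (k+2) =
    (Finset.Ico 1 (k + 2)).attach.sup
      (fun i => pairMul (apow K E i.1) (apow K E (k + 2 - i.1))) := by rw [apow]

theorem pairMul_mono {A A' B B' : Submodule K E} (hA : A ≤ A') (hB : B ≤ B') :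
    pairMul A B ≤ pairMul A' B' :=
  Submodule.span_mono (fun z hz => by
    obtain ⟨x, hx, y, hy, h⟩ := hz; exact ⟨x, hA hx, y, hB hy, h⟩)

theorem mul_mem_pairMul {A B : Submodule K E} {x y : E} (hx : x ∈ A) (hy : y ∈ B) :
    x * y ∈ pairMul A B := Submodule.subset_span ⟨x, hx, y, hy, rfl⟩

theorem pairMul_le_apow {i j : ℕ} (hi : 1 ≤ i) (hj : 1 ≤ j) :
    pairMul (apow K E i) (apow K E j) ≤ apow K E (i + j) := by
  obtain ⟨k, hk⟩ : ∃ k, i + j = k + 2 := ⟨i + j - 2, by omega⟩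
  rw [hk, apow_add_two]
  have hmem : i ∈ Finset.Ico 1 (k + 2) := by rw [Finset.mem_Ico]; omega
  have := Finset.le_sup (f := fun i : {x // x ∈ Finset.Ico 1 (k+2)} =>
      pairMul (apow K E i.1) (apow K E (k + 2 - i.1)))
    (Finset.mem_attach _ ⟨i, hmem⟩)
  simpa [show k + 2 - i = j by omega] using this

theorem apow_sup_le {k : ℕ} {X : Submodule K E}
    (h : ∀ i j : ℕ, 1 ≤ i → 1 ≤ j → i + j = k + 2 →
      pairMul (apow K E i) (apow K E j) ≤ X) :
    apow K E (k + 2) ≤ X := by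
  rw [apow_add_two]
  refine Finset.sup_le fun i _ => ?_
  obtain ⟨i, hi⟩ := i
  rw [Finset.mem_Ico] at hi
  exact h i (k + 2 - i) (by omega) (by omega) (by omega)


theorem apow_succ_le : ∀ k, 1 ≤ k → apow K E (k + 1) ≤ apow K E k := by
  intro k
  induction k using Nat.strong_induction_on with
  | _ k ih =>
    intro hk
    match k, hk with
    | 1, _ => exact le_top.trans_eq apow_one.symm
    | (k' + 2), _ =>
      refine apow_sup_le fun i j hi hj hij => ?_
      rcases Nat.lt_or_ge 1 j with hj2 | hj1
      · calc pairMul (apow K E i) (apow K E j)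
            ≤ pairMul (apow K E i) (apow K E (j - 1)) := by
              refine pairMul_mono le_rfl ?_
              have := ih (j - 1) (by omega) (by omega)
              rwa [show j - 1 + 1 = j by omega] at this
          _ ≤ apow K E (i + (j - 1)) := pairMul_le_apow hi (by omega)
          _ = apow K E (k' + 2) := by rw [show i + (j-1) = k' + 2 by omega]
      · have hi' : i = k' + 2 := by omega
        have hj' : j = 1 := by omega
        subst hi' hj'
        calc pairMul (apow K E (k' + 2)) (apow K E 1)
            ≤ pairMul (apow K E (k' + 1)) (apow K E 1) := by
              refine pairMul_mono ?_ le_rfl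
              exact ih (k' + 1) (by omega) (by omega)
          _ ≤ apow K E (k' + 2) := pairMul_le_apow (by omega) le_rfl

theorem apow_le_apow {j k : ℕ} (hj : 1 ≤ j) (hjk : j ≤ k) :
    apow K E k ≤ apow K E j := by
  induction k with
  | zero => omega
  | succ k ih =>
    rcases Nat.lt_or_ge j (k + 1) with h | h
    · exact (apow_succ_le k (by omega)).trans (ih (by omega))
    · have : j = k + 1 := by omega
      subst this; exact le_rfl
end

section
variable {K : Type*} [Field K] {E : Type*} [NonUnitalNonAssocRing E]
  [Module K E] [SMulCommClass K E E] [IsScalarTower K E E]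

/-- If `E^2 = E` then all powers are `E`. -/
theorem apow_top_stab (h2 : apow K E 2 = ⊤) : ∀ j, 1 ≤ j → apow K E j = ⊤ := by
  intro j
  induction j using Nat.strong_induction_on with
  | _ j ih =>
    intro hj
    match j, hj with
    | 1, _ => exact apow_one
    | (j' + 2), _ =>
      refine le_antisymm le_top ?_
      have h1 : apow K E (j' + 1) = ⊤ := ih (j' + 1) (by omega) (by omega)
      have : pairMul (apow K E 1) (apow K E (j' + 1)) ≤ apow K E (j' + 2) := by
        have := pairMul_le_apow (K := K) (E := E) (i := 1) (j := j' + 1) le_rfl (by omega)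
        rwa [show 1 + (j' + 1) = j' + 2 by omega] at this
      rw [apow_one, h1] at this
      have h2' : pairMul (⊤ : Submodule K E) ⊤ = ⊤ := by
        have l1 : pairMul (apow K E 1) (apow K E 1) ≤ apow K E 2 :=
          pairMul_le_apow le_rfl le_rfl
        rw [apow_one, h2] at l1
        refine le_antisymm le_top ?_
        have : apow K E 2 ≤ pairMul (⊤ : Submodule K E) ⊤ := by
          refine apow_sup_le fun i j hi hj hij => ?_
          have hi1 : i = 1 := by omega
          have hj1 : j = 1 := by omega
          subst hi1 hj1
          rw [apow_one]
        rwa [h2] at this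
      rwa [h2'] at this

/-- Stabilization: if `E^(2m-1) = E^m` with `m ≥ 2` then `E^j = E^m` for `j ≥ m`. -/
theorem apow_stab {m : ℕ} (hm : 2 ≤ m) (h : apow K E (2 * m - 1) = apow K E m) :
    ∀ j, m ≤ j → apow K E j = apow K E m := by
  intro j
  induction j using Nat.strong_induction_on with
  | _ j ih =>
    intro hj
    rcases Nat.lt_or_ge j (2 * m) with hsmall | hbig
    · -- m ≤ j ≤ 2m - 1 : squeeze
      refine le_antisymm (apow_le_apow (by omega) hj) ?_
      rw [← h]
      exact apow_le_apow (by omega) (by omega)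
    · -- j ≥ 2m
      refine le_antisymm (apow_le_apow (by omega) hj) ?_
      rw [← h]
      have h2m : 2 * m - 1 = (2 * m - 3) + 2 := by omega
      rw [h2m]
      refine apow_sup_le fun a b ha hb hab => ?_
      have hab' : a + b = 2 * m - 1 := by omega
      rcases le_or_gt m b with hbm | hbm
      · -- bump b to b' = b + j - (2m-1)
        set b' := b + j - (2 * m - 1) with hb'
        have e1 : apow K E b = apow K E m := ih b (by omega) hbm
        have e2 : apow K E b' = apow K E m := ih b' (by omega) (by omega)
        have : pairMul (apow K E a) (apow K E b') ≤ apow K E (a + b') :=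
          pairMul_le_apow ha (by omega)
        rw [show a + b' = j by omega] at this
        calc pairMul (apow K E a) (apow K E b) = pairMul (apow K E a) (apow K E b') := by
              rw [e1, e2]
          _ ≤ apow K E j := this
      · have ham : m ≤ a := by omega
        set a' := a + j - (2 * m - 1) with ha'
        have e1 : apow K E a = apow K E m := ih a (by omega) ham
        have e2 : apow K E a' = apow K E m := ih a' (by omega) (by omega)
        have : pairMul (apow K E a') (apow K E b) ≤ apow K E (a' + b) :=
          pairMul_le_apow (by omega) hb
        rw [show a' + b = j by omega] at this
        calc pairMul (apow K E a) (apow K E b) = pairMul (apow K E a') (apow K E b) := by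
              rw [e1, e2]
          _ ≤ apow K E j := this
end

theorem apow_upper_bound (n : ℕ) (hn : 0 < n) (E : Type) [NonUnitalNonAssocRing E]
    [Module ℂ E] [SMulCommClass ℂ E E] [IsScalarTower ℂ E E] (b : Module.Basis (Fin n) ℂ E)
    (hnil : ∃ m : ℕ, 0 < m ∧ apow ℂ E m = ⊥) :
    apow ℂ E (2 ^ (n - 1) + 1) = ⊥ := by
  haveI : FiniteDimensional ℂ E := Module.Finite.of_basis b
  have hrank : Module.finrank ℂ E = n := by
    rw [Module.finrank_eq_card_basis b, Fintype.card_fin]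
  obtain ⟨m0, hm0, hm0bot⟩ := hnil
  -- strict drop
  have drop : ∀ m, 2 ≤ m → apow ℂ E m ≠ ⊥ → apow ℂ E (2 * m - 1) < apow ℂ E m := by
    intro m hm hne
    refine lt_of_le_of_ne (apow_le_apow (by omega) (by omega)) fun heq => ?_
    have := apow_stab hm heq (max m m0) (le_max_left _ _)
    have hle : apow ℂ E (max m m0) ≤ apow ℂ E m0 :=
      apow_le_apow (by omega) (le_max_right _ _)
    rw [this, hm0bot] at hle
    exact hne (le_bot_iff.mp hle)
  have main : ∀ k, 1 ≤ k →
      apow ℂ E (2 ^ (k - 1) + 1) = ⊥ ∨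
      Module.finrank ℂ (apow ℂ E (2 ^ (k - 1) + 1)) + k ≤ n := by
    intro k
    induction k with
    | zero => omega
    | succ k ih =>
      intro _
      rcases Nat.eq_zero_or_pos k with hk0 | hk1
      · subst hk0
        by_cases h2 : apow ℂ E 2 = ⊤
        · left
          have := apow_top_stab h2 m0 (by omega)
          rw [hm0bot] at this
          simpa using le_bot_iff.mp (this ▸ le_top : apow ℂ E (2 ^ (1-1) + 1) ≤ ⊥)
        · right
          have hlt : apow ℂ E 2 < ⊤ := lt_top_iff_ne_top.mpr h2
          have := Submodule.finrank_lt_finrank_of_lt hlt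
          rw [finrank_top, hrank] at this
          simpa using this
      · rcases ih hk1 with hbot | hle
        · left
          have : apow ℂ E (2 ^ k + 1) ≤ apow ℂ E (2 ^ (k - 1) + 1) :=
            apow_le_apow (Nat.le_add_left 1 _) (by
              have : 2 ^ (k-1) ≤ 2 ^ k := Nat.pow_le_pow_right (by omega) (by omega)
              omega)
          rw [hbot] at this
          simpa using le_bot_iff.mp this
        · by_cases hb : apow ℂ E (2 ^ (k - 1) + 1) = ⊥
          · left
            have : apow ℂ E (2 ^ k + 1) ≤ apow ℂ E (2 ^ (k - 1) + 1) :=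
              apow_le_apow (Nat.le_add_left 1 _) (by
                have : 2 ^ (k-1) ≤ 2 ^ k := Nat.pow_le_pow_right (by omega) (by omega)
                omega)
            rw [hb] at this
            simpa using le_bot_iff.mp this
          · right
            have hd := drop (2 ^ (k - 1) + 1) (by
                have : 1 ≤ 2 ^ (k-1) := Nat.one_le_two_pow
                omega) hb
            have h2m : 2 * (2 ^ (k - 1) + 1) - 1 = 2 ^ k + 1 := by
              have : 2 * 2 ^ (k - 1) = 2 ^ k := by
                rw [← pow_succ']
                congr 1
                omega
              omega
            rw [h2m] at hd
            have := Submodule.finrank_lt_finrank_of_lt hd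
            simpa using by omega
  rcases main n hn with h | h
  · exact h
  · have h0 : Module.finrank ℂ (apow ℂ E (2 ^ (n - 1) + 1)) = 0 := by omega
    exact Submodule.finrank_eq_zero.mp h0

namespace ExAlg

variable (n : ℕ)

/-- Structure matrix of the extremal example: `e_i * e_i = e_{i+1}`. -/
noncomputable def exP : Fin n → Fin n → ℂ :=
  fun i k => if (k : ℕ) = (i : ℕ) + 1 then 1 else 0

/-- Subspace of vectors vanishing on coordinates `< a`. -/
def exW (a : ℕ) : Submodule ℂ (EvAlg (exP n)) where
  carrier := {x | ∀ j : Fin n, (j : ℕ) < a → x j = 0}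
  add_mem' := by
    intro x y hx hy j hj
    show x j + y j = 0
    rw [hx j hj, hy j hj, add_zero]
  zero_mem' := fun j _ => rfl
  smul_mem' := by
    intro c x hx j hj
    show c * x j = 0
    rw [hx j hj, mul_zero]

theorem mem_exW {a : ℕ} {x : EvAlg (exP n)} :
    x ∈ exW n a ↔ ∀ j : Fin n, (j : ℕ) < a → x j = 0 := Iff.rfl

theorem exW_antitone {a b : ℕ} (h : a ≤ b) : exW n b ≤ exW n a :=
  fun x hx j hj => hx j (lt_of_lt_of_le hj h)

theorem exW_zero : exW n 0 = ⊤ := by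
  refine eq_top_iff.mpr fun x _ j hj => absurd hj (by omega)

theorem exW_bot {a : ℕ} (h : n ≤ a) : exW n a = ⊥ := by
  refine le_bot_iff.mp fun x hx => ?_
  have : x = 0 := funext fun j => hx j (lt_of_lt_of_le j.isLt h)
  simpa [this] using Submodule.zero_mem _

/-- Basis vectors. -/
noncomputable def eb (i : Fin n) : EvAlg (exP n) := Pi.single i 1

theorem eb_apply (i k : Fin n) : eb n i k = if k = i then 1 else 0 := by
  rw [eb, Pi.single_apply]

theorem eb_mem_exW {a : ℕ} {i : Fin n} (h : a ≤ (i : ℕ)) : eb n i ∈ exW n a := by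
  intro j hj
  rw [eb_apply]
  exact if_neg (fun he => by subst he; omega)

theorem exW_ne_bot {a : ℕ} (h : a < n) : exW n a ≠ ⊥ := by
  intro hbot
  have hmem : eb n ⟨n - 1, by omega⟩ ∈ exW n a := eb_mem_exW n (by simp; omega)
  rw [hbot, Submodule.mem_bot] at hmem
  have := congrFun hmem ⟨n - 1, by omega⟩
  rw [eb_apply, if_pos rfl] at this
  exact one_ne_zero (this.trans rfl)

theorem eb_mul_eb {i j : Fin n} (hij : (j : ℕ) = (i : ℕ) + 1) :
    eb n i * eb n i = eb n j := by
  funext k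
  rw [EvAlg.mul_def]
  rw [Finset.sum_eq_single i]
  · rw [eb_apply, if_pos rfl, one_mul, one_mul, exP, eb_apply]
    by_cases hk : k = j
    · subst hk; rw [if_pos hij, if_pos rfl]
    · rw [if_neg (fun hc => hk (Fin.ext (by omega))), if_neg hk]
  · intro s _ hs
    rw [eb_apply, if_neg hs, zero_mul, zero_mul]
  · intro h; exact absurd (Finset.mem_univ i) h

theorem mul_mem_exW {a b : ℕ} {x y : EvAlg (exP n)} (hx : x ∈ exW n a) (hy : y ∈ exW n b) :
    x * y ∈ exW n (max a b + 1) := by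
  intro k hk
  rw [EvAlg.mul_def]
  refine Finset.sum_eq_zero fun s _ => ?_
  by_cases hs : (k : ℕ) = (s : ℕ) + 1
  · have hsm : (s : ℕ) < max a b := by omega
    rcases Nat.lt_or_ge (s : ℕ) a with h | h
    · rw [hx s h, zero_mul, zero_mul]
    · rw [hy s (by omega), mul_zero, zero_mul]
  · rw [exP, if_neg hs, mul_zero]

theorem pairMul_exW (a b : ℕ) :
    pairMul (exW n a) (exW n b) = exW n (max a b + 1) := by
  refine le_antisymm ?_ ?_
  · rw [pairMul, Submodule.span_le]
    rintro z ⟨x, hx, y, hy, rfl⟩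
    exact mul_mem_exW n hx hy
  · intro x hx
    have hrepr : x = ∑ j : Fin n, x j • eb n j := by
      funext k
      show x k = (∑ j : Fin n, x j • eb n j) k
      erw [Finset.sum_apply]
      rw [Finset.sum_eq_single k]
      · show x k = x k * _
        rw [eb_apply, if_pos rfl, mul_one]
      · intro s _ hs
        show x s * _ = 0
        rw [eb_apply, if_neg (Ne.symm hs), mul_zero]
      · intro h; exact absurd (Finset.mem_univ k) h
    rw [hrepr]
    refine Submodule.sum_mem _ fun j _ => ?_
    rcases Nat.lt_or_ge (j : ℕ) (max a b + 1) with hj | hj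
    · rw [hx j hj, zero_smul]
      exact Submodule.zero_mem _
    · refine Submodule.smul_mem _ _ ?_
      have h1 : 1 ≤ (j : ℕ) := by omega
      set i : Fin n := ⟨(j : ℕ) - 1, by omega⟩ with hi
      have : eb n j = eb n i * eb n i := (eb_mul_eb n (by simp [hi]; omega)).symm
      rw [this]
      exact mul_mem_pairMul (eb_mem_exW n (by simp [hi]; omega))
        (eb_mem_exW n (by simp [hi]; omega))

end ExAlg

namespace ExAlg

variable (n : ℕ)

theorem clog_le_of_split {i j k : ℕ} (hi : 1 ≤ i) (hj : 1 ≤ j) (hij : i + j = k + 2) :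
    Nat.clog 2 (k + 2) ≤ max (Nat.clog 2 i) (Nat.clog 2 j) + 1 := by
  have hrec : Nat.clog 2 (k + 2) = Nat.clog 2 ((k + 3) / 2) + 1 := by
    have := Nat.clog_of_two_le (b := 2) (n := k + 2) (by omega) (by omega)
    rw [this, show (k + 2 + 2 - 1) / 2 = (k + 3) / 2 by omega]
  have hmax : (k + 3) / 2 ≤ max i j := by omega
  have h1 : Nat.clog 2 ((k + 3) / 2) ≤ Nat.clog 2 (max i j) := Nat.clog_mono_right 2 hmax
  have h2 : Nat.clog 2 (max i j) ≤ max (Nat.clog 2 i) (Nat.clog 2 j) := by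
    rcases max_choice i j with h | h <;> rw [h] <;> [exact le_max_left _ _; exact le_max_right _ _]
  omega

theorem apow_exAlg : ∀ m, 1 ≤ m → apow ℂ (EvAlg (exP n)) m = exW n (Nat.clog 2 m) := by
  intro m
  induction m using Nat.strong_induction_on with
  | _ m ih =>
    intro hm
    match m, hm with
    | 1, _ => rw [apow_one, Nat.clog_one_right, exW_zero]
    | (k + 2), _ =>
      refine le_antisymm ?_ ?_
      · refine apow_sup_le fun i j hi hj hij => ?_
        rw [ih i (by omega) hi, ih j (by omega) hj, pairMul_exW]
        exact exW_antitone n (clog_le_of_split hi hj hij)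
      · -- the balanced split attains the value
        set i0 := (k + 3) / 2 with hi0
        have hi0mem : i0 ∈ Finset.Ico 1 (k + 2) := by rw [Finset.mem_Ico]; omega
        have hterm : pairMul (apow ℂ (EvAlg (exP n)) i0) (apow ℂ (EvAlg (exP n)) (k + 2 - i0))
            = exW n (Nat.clog 2 (k + 2)) := by
          rw [ih i0 (by omega) (by omega), ih (k + 2 - i0) (by omega) (by omega), pairMul_exW]
          congr 1
          have hmax : max (Nat.clog 2 i0) (Nat.clog 2 (k + 2 - i0)) = Nat.clog 2 i0 :=
            max_eq_left (Nat.clog_mono_right 2 (by omega))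
          rw [hmax]
          have := Nat.clog_of_two_le (b := 2) (n := k + 2) (by omega) (by omega)
          rw [this, show (k + 2 + 2 - 1) / 2 = i0 by omega]
        rw [apow_add_two]
        calc exW n (Nat.clog 2 (k + 2)) = _ := hterm.symm
          _ ≤ _ := by
            have := Finset.le_sup (f := fun i : {x // x ∈ Finset.Ico 1 (k + 2)} =>
                pairMul (apow ℂ (EvAlg (exP n)) i.1) (apow ℂ (EvAlg (exP n)) (k + 2 - i.1)))
              (Finset.mem_attach _ ⟨i0, hi0mem⟩)
            exact this

end ExAlg

namespace ExAlg

variable (n : ℕ)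

noncomputable def exB : Module.Basis (Fin n) ℂ (EvAlg (exP n)) := Pi.basisFun ℂ (Fin n)

theorem exB_apply (i : Fin n) : exB n i = eb n i := by
  rw [exB, eb]
  exact Pi.basisFun_apply ℂ (Fin n) i

theorem exB_orth (i j : Fin n) (hij : i ≠ j) : exB n i * exB n j = 0 := by
  rw [exB_apply, exB_apply]
  funext k
  rw [EvAlg.mul_def]
  refine (Finset.sum_eq_zero fun s _ => ?_).trans rfl
  rw [eb_apply, eb_apply]
  by_cases hs : s = i
  · subst hs
    rw [if_neg hij, mul_zero, zero_mul]
  · rw [if_neg hs, zero_mul, zero_mul]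

end ExAlg

theorem evolution_algebra_max_nilindex' (n : ℕ) (hn : 0 < n) :
    (∀ (E : Type) [NonUnitalNonAssocRing E] [Module ℂ E]
        [SMulCommClass ℂ E E] [IsScalarTower ℂ E E]
        (b : Module.Basis (Fin n) ℂ E), (∀ i j : Fin n, i ≠ j → b i * b j = 0) →
        (∃ m : ℕ, 0 < m ∧ apow ℂ E m = ⊥) →
        sInf {m : ℕ | 0 < m ∧ apow ℂ E m = ⊥} ≤ 2 ^ (n - 1) + 1) ∧
    (∃ (p : Fin n → Fin n → ℂ) (b : Module.Basis (Fin n) ℂ (EvAlg p)),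
        (∀ i j : Fin n, i ≠ j → b i * b j = 0) ∧
        (∃ m : ℕ, 0 < m ∧ apow ℂ (EvAlg p) m = ⊥) ∧
        sInf {m : ℕ | 0 < m ∧ apow ℂ (EvAlg p) m = ⊥} = 2 ^ (n - 1) + 1) := by
  constructor
  · intro E _ _ _ _ b _ hnil
    exact Nat.sInf_le ⟨Nat.succ_pos _, apow_upper_bound n hn E b hnil⟩
  · refine ⟨ExAlg.exP n, ExAlg.exB n, ExAlg.exB_orth n, ?_⟩
    have hbot : apow ℂ (EvAlg (ExAlg.exP n)) (2 ^ (n - 1) + 1) = ⊥ := by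
      rw [ExAlg.apow_exAlg n _ (Nat.succ_le_succ (Nat.zero_le _))]
      refine ExAlg.exW_bot n ?_
      show n ≤ Nat.clog 2 (2 ^ (n - 1) + 1)
      by_contra h
      have h1 : Nat.clog 2 (2 ^ (n - 1) + 1) ≤ n - 1 := by omega
      have := (Nat.clog_le_iff_le_pow (by norm_num)).mp h1
      omega
    have hmem : 2 ^ (n - 1) + 1 ∈ {m : ℕ | 0 < m ∧ apow ℂ (EvAlg (ExAlg.exP n)) m = ⊥} :=
      ⟨Nat.succ_pos _, hbot⟩
    refine ⟨⟨2 ^ (n - 1) + 1, hmem⟩, ?_⟩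
    have hlb : ∀ m ∈ {m : ℕ | 0 < m ∧ apow ℂ (EvAlg (ExAlg.exP n)) m = ⊥},
        2 ^ (n - 1) + 1 ≤ m := by
      rintro m ⟨hm0, hmbot⟩
      by_contra h
      push_neg at h
      have hle : m ≤ 2 ^ (n - 1) := by omega
      rw [ExAlg.apow_exAlg n m hm0] at hmbot
      refine ExAlg.exW_ne_bot n ?_ hmbot
      have := (Nat.clog_le_iff_le_pow (by norm_num : 1 < 2)).mpr hle
      omega
    exact le_antisymm (Nat.sInf_le hmem) (hlb _ (Nat.sInf_mem ⟨_, hmem⟩))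


/-- The maximum possible index of nilpotency of an `n`-dimensional nilpotent
evolution algebra (over `ℂ`) is `2^{n-1} + 1`: every nilpotent `n`-dimensional
evolution algebra has index of nilpotency at most `2^{n-1} + 1`, and this
bound is attained by some `n`-dimensional evolution algebra. -/
theorem evolution_algebra_max_nilindex (n : ℕ) (hn : 0 < n) :
    (∀ (E : Type) [NonUnitalNonAssocRing E] [Module ℂ E]
        [SMulCommClass ℂ E E] [IsScalarTower ℂ E E]
        (b : Module.Basis (Fin n) ℂ E), (∀ i j : Fin n, i ≠ j → b i * b j = 0) →
        (∃ m : ℕ, 0 < m ∧ apow ℂ E m = ⊥) →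
        sInf {m : ℕ | 0 < m ∧ apow ℂ E m = ⊥} ≤ 2 ^ (n - 1) + 1) ∧
    (∃ (p : Fin n → Fin n → ℂ) (b : Module.Basis (Fin n) ℂ (EvAlg p)),
        (∀ i j : Fin n, i ≠ j → b i * b j = 0) ∧
        (∃ m : ℕ, 0 < m ∧ apow ℂ (EvAlg p) m = ⊥) ∧
        sInf {m : ℕ | 0 < m ∧ apow ℂ (EvAlg p) m = ⊥} = 2 ^ (n - 1) + 1) := by
  exact evolution_algebra_max_nilindex' n hn
end

section
/- Every baric evolution algebra E over a field K of characteristic different from 2 admits a natural basis {e_1,...,e_n} and a weight ω : E → K such that ω(e_1) = 1 and ω(e_i) = 0 for i > 1; moreover E = K e_1 ⊕ ker(ω) as vector spaces and e_1 · ker(ω) = 0. -/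
/-- Every baric evolution algebra `E` over a field `K` of characteristic
different from 2 admits a natural basis `{e_1, …, e_n}` and a weight
`ω : E → K` with `ω e_1 = 1` and `ω e_i = 0` for `i > 1`; moreover
`E = K e_1 ⊕ ker ω` and `e_1 · ker ω = 0`. -/
theorem baric_evolution_algebra_normalized_weight
    {K : Type*} [Field K] (hchar : (2 : K) ≠ 0)
    {E : Type*} [NonUnitalNonAssocRing E]
    [Module K E] [SMulCommClass K E E] [IsScalarTower K E E]
    {n : ℕ} (b : Module.Basis (Fin n) K E)
    (hb : ∀ i j : Fin n, i ≠ j → b i * b j = 0)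
    (hbaric : ∃ ω : E →ₗ[K] K, ω ≠ 0 ∧ ∀ x y : E, ω (x * y) = ω x * ω y) :
    ∃ (hn : 0 < n) (c : Module.Basis (Fin n) K E) (ω : E →ₗ[K] K),
      (∀ i j : Fin n, i ≠ j → c i * c j = 0) ∧
      (∀ x y : E, ω (x * y) = ω x * ω y) ∧
      ω (c ⟨0, hn⟩) = 1 ∧
      (∀ i : Fin n, i ≠ ⟨0, hn⟩ → ω (c i) = 0) ∧
      IsCompl (K ∙ c ⟨0, hn⟩) (LinearMap.ker ω) ∧
      (∀ x ∈ LinearMap.ker ω, c ⟨0, hn⟩ * x = 0) := by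
  obtain ⟨ω, hω0, hωmul⟩ := hbaric
  -- n > 0
  have hnontriv : Nontrivial E := by
    by_contra h
    rw [not_nontrivial_iff_subsingleton] at h
    exact hω0 (Subsingleton.elim _ _)
  have hn : 0 < n := by
    rcases b.index_nonempty with ⟨i⟩
    exact i.pos
  set z : Fin n := ⟨0, hn⟩ with hz
  -- there is an index with nonzero weight
  have hex : ∃ i : Fin n, ω (b i) ≠ 0 := by
    by_contra h
    push_neg at h
    exact hω0 (b.ext h)
  obtain ⟨i0, hi0⟩ := hex
  -- weights of other basis vectors vanish
  have hother : ∀ j : Fin n, j ≠ i0 → ω (b j) = 0 := by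
    intro j hj
    have : ω (b i0 * b j) = ω (b i0) * ω (b j) := hωmul _ _
    rw [hb i0 j (Ne.symm hj), map_zero] at this
    rcases mul_eq_zero.mp this.symm with h | h
    · exact absurd h hi0
    · exact h
  set σ : Equiv.Perm (Fin n) := Equiv.swap z i0 with hσ
  set w : Fin n → Kˣ := fun i => if i = z then (Units.mk0 (ω (b i0)) hi0)⁻¹ else 1 with hw
  set c : Module.Basis (Fin n) K E := (b.reindex σ.symm).unitsSMul w with hc
  have hcapply : ∀ i : Fin n, c i = (w i : K) • b (σ i) := by
    intro i
    rw [hc, Module.Basis.unitsSMul_apply, Module.Basis.reindex_apply, Equiv.symm_symm, Units.smul_def]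
  have hcnat : ∀ i j : Fin n, i ≠ j → c i * c j = 0 := by
    intro i j hij
    rw [hcapply, hcapply, smul_mul_assoc, mul_smul_comm,
      hb _ _ (fun h => hij (σ.injective h)), smul_zero, smul_zero]
  have hc0 : c z = (ω (b i0))⁻¹ • b i0 := by
    rw [hcapply]
    simp [hw, hσ, Equiv.swap_apply_left, Units.smul_def]
  have hωc0 : ω (c z) = 1 := by
    rw [hc0, map_smul, smul_eq_mul, inv_mul_cancel₀ hi0]
  have hωci : ∀ i : Fin n, i ≠ z → ω (c i) = 0 := by
    intro i hi
    have hσi : σ i ≠ i0 := by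
      intro h
      apply hi
      have := σ.injective (h.trans (Equiv.swap_apply_left z i0).symm)
      exact this
    rw [hcapply, map_smul, hother _ hσi, smul_zero]
  -- e_1 kills ker ω
  have hkill : ∀ x ∈ LinearMap.ker ω, c z * x = 0 := by
    intro x hx
    have hrepr : ∀ x : E, ω x = c.repr x z := by
      intro x
      conv_lhs => rw [← c.sum_repr x]
      rw [map_sum]
      rw [Finset.sum_eq_single z]
      · rw [map_smul, hωc0, smul_eq_mul, mul_one]
      · intro i _ hi
        rw [map_smul, hωci i hi, smul_eq_mul, mul_zero]
      · intro h
        exact absurd (Finset.mem_univ z) h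
    have hx0 : c.repr x z = 0 := by rw [← hrepr]; exact hx
    conv_lhs => rw [← c.sum_repr x]
    rw [Finset.mul_sum]
    apply Finset.sum_eq_zero
    intro i _
    rcases eq_or_ne i z with rfl | hi
    · rw [hx0, zero_smul, mul_zero]
    · rw [mul_smul_comm, hcnat z i (Ne.symm hi), smul_zero]
  -- IsCompl
  have hcompl : IsCompl (K ∙ c z) (LinearMap.ker ω) := by
    constructor
    · rw [Submodule.disjoint_def]
      intro x hx hx'
      obtain ⟨a, rfl⟩ := Submodule.mem_span_singleton.mp hx
      have : a = 0 := by
        have := (LinearMap.mem_ker.mp hx')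
        rw [map_smul, hωc0, smul_eq_mul, mul_one] at this
        exact this
      rw [this, zero_smul]
    · rw [codisjoint_iff_le_sup]
      intro x _
      have : x = ω x • c z + (x - ω x • c z) := by abel
      rw [this]
      apply Submodule.add_mem_sup
      · exact Submodule.smul_mem _ _ (Submodule.mem_span_singleton_self _)
      · rw [LinearMap.mem_ker, map_sub, map_smul, hωc0, smul_eq_mul, mul_one, sub_self]
  exact ⟨hn, c, ω, hcnat, hωmul, hωc0, hωci, hcompl, hkill⟩
end

section
/- A finite-dimensional nilpotent evolution algebra is not dibaric. -/
section

variable {K : Type*} [Field K] {E : Type*} [NonUnitalNonAssocRing E]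
  [Module K E] [SMulCommClass K E E] [IsScalarTower K E E]

/-- Multiplication of the sex differentiation algebra, realized on `K × K`
with basis `m = (1,0)`, `w = (0,1)`: `m² = w² = 0`, `m w = w m = (m + w)/2`. -/
def sexMul (a c : K × K) : K × K :=
  ((a.1 * c.2 + a.2 * c.1) / 2, (a.1 * c.2 + a.2 * c.1) / 2)

/-- An algebra is dibaric if it admits a surjective algebra homomorphism onto
the sex differentiation algebra. -/
def Dibaric (K : Type*) (E : Type*) [Field K] [NonUnitalNonAssocRing E]
    [Module K E] [SMulCommClass K E E] [IsScalarTower K E E] : Prop :=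
  ∃ f : E →ₗ[K] K × K, Function.Surjective f ∧
    ∀ x y : E, f (x * y) = sexMul (f x) (f y)

theorem mul_mem_apow_succ (k : ℕ) (hk : 1 ≤ k) (x y : E) (hy : y ∈ apow K E k) :
    x * y ∈ apow K E (k + 1) := by
  obtain ⟨j, rfl⟩ : ∃ j, k = j + 1 := ⟨k - 1, by omega⟩
  have h1 : pairMul (apow K E 1) (apow K E (j + 1)) ≤ apow K E (j + 2) := by
    have hm : (1 : ℕ) ∈ Finset.Ico 1 (j + 2) := by simp
    have heq : pairMul (apow K E 1) (apow K E (j + 1)) =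
        (fun i : {x // x ∈ Finset.Ico 1 (j + 2)} =>
          pairMul (apow K E i.1) (apow K E (j + 2 - i.1))) ⟨1, hm⟩ := by
      norm_num
    rw [heq]
    conv_rhs => rw [apow]
    exact Finset.le_sup (f := fun i : {x // x ∈ Finset.Ico 1 (j + 2)} =>
      pairMul (apow K E i.1) (apow K E (j + 2 - i.1))) (Finset.mem_attach _ _)
  apply h1
  exact Submodule.subset_span ⟨x, by rw [apow]; trivial, y, hy, rfl⟩

/-- A finite-dimensional nilpotent evolution algebra is not dibaric. -/
theorem nilpotent_evolution_algebra_not_dibaric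
    (hchar : (2 : K) ≠ 0)
    {n : ℕ} (b : Module.Basis (Fin n) K E)
    (hb : ∀ i j : Fin n, i ≠ j → b i * b j = 0)
    (hnil : ∃ m : ℕ, 0 < m ∧ apow K E m = ⊥) :
    ¬ Dibaric K E := by
  rintro ⟨f, hsurj, hmul⟩
  obtain ⟨x, hx⟩ := hsurj (1, 1)
  have idem : sexMul ((1 : K), (1 : K)) (1, 1) = (1, 1) := by
    simp only [sexMul, one_mul, Prod.mk.injEq]
    constructor <;> · rw [show (1 : K) + 1 = 2 by ring, div_self hchar]
  have key : ∀ k : ℕ, 1 ≤ k → ∃ z ∈ apow K E k, f z = (1, 1) := by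
    intro k hk
    induction k, hk using Nat.le_induction with
    | base => exact ⟨x, by simp [apow], hx⟩
    | succ k hk ih =>
      obtain ⟨z, hz, hfz⟩ := ih
      exact ⟨x * z, mul_mem_apow_succ k hk x z hz, by rw [hmul, hx, hfz, idem]⟩
  obtain ⟨m, hm, hbot⟩ := hnil
  obtain ⟨z, hz, hfz⟩ := key m hm
  rw [hbot, Submodule.mem_bot] at hz
  rw [hz, map_zero] at hfz
  exact one_ne_zero (congrArg Prod.fst hfz.symm)

end
end

section
/- If the structure matrix of an evolution algebra E (with respect to a natural basis) has nonzero determinant, then E is not dibaric. -/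
section

variable {K : Type*} [Field K] {E : Type*} [NonUnitalNonAssocRing E]
  [Module K E] [SMulCommClass K E E] [IsScalarTower K E E]

/-- If the structure matrix of an evolution algebra with respect to a natural
basis has nonzero determinant, then the algebra is not dibaric. -/
theorem evolution_algebra_det_ne_zero_not_dibaric
    (hchar : (2 : K) ≠ 0)
    {n : ℕ} (b : Module.Basis (Fin n) K E)
    (hb : ∀ i j : Fin n, i ≠ j → b i * b j = 0)
    (P : Matrix (Fin n) (Fin n) K)
    (hp : ∀ i : Fin n, b i * b i = ∑ k, P i k • b k)
    (hdet : P.det ≠ 0) :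
    ¬ Dibaric K E := by
  rintro ⟨f, hsurj, hmul⟩
  set a : Fin n → K := fun i => (f (b i)).1 with ha
  set c : Fin n → K := fun i => (f (b i)).2 with hc
  have key : ∀ i, P.mulVec a i = a i * c i ∧ P.mulVec c i = a i * c i := by
    intro i
    have h1 : f (b i * b i) = ∑ k, P i k • f (b k) := by
      rw [hp i, map_sum]; simp
    have h2 := hmul (b i) (b i)
    rw [h1] at h2
    have half : (a i * c i + c i * a i) / 2 = a i * c i := by
      field_simp; ring
    constructor
    · have := congrArg Prod.fst h2
      simpa [Matrix.mulVec, dotProduct, sexMul, half, show ∀ x y : K, (x * y + y * x) / 2 = x * y from fun x y => by field_simp; ring, Prod.fst_sum, eq_comm, ha, hc]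
        using this
    · have := congrArg Prod.snd h2
      simpa [Matrix.mulVec, dotProduct, sexMul, half, show ∀ x y : K, (x * y + y * x) / 2 = x * y from fun x y => by field_simp; ring, Prod.snd_sum, eq_comm, ha, hc]
        using this
  have hac : a = c := by
    have h0 : P.mulVec (a - c) = 0 := by
      funext i
      rw [Matrix.mulVec_sub]
      simp [(key i).1, (key i).2]
    have h1 := congrArg P⁻¹.mulVec h0
    rw [Matrix.mulVec_mulVec, Matrix.nonsing_inv_mul P (isUnit_iff_ne_zero.mpr hdet), Matrix.one_mulVec,
      Matrix.mulVec_zero] at h1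
    exact sub_eq_zero.mp h1
  have hdiag : ∀ x : E, (f x).1 = (f x).2 := by
    have heq : (LinearMap.fst K K K).comp f = (LinearMap.snd K K K).comp f := by
      apply b.ext
      intro i
      simpa using congrFun hac i
    intro x
    exact DFunLike.congr_fun heq x
  obtain ⟨x, hx⟩ := hsurj (1, 0)
  have h10 := hdiag x
  rw [hx] at h10
  exact one_ne_zero h10

end
end

section
/- A finite-dimensional evolution algebra E has a unit element if and only if its structure matrix with respect to some natural basis is diagonal with all diagonal entries nonzero. -/
/-- A finite-dimensional evolution algebra has a unit element if and only if
its structure matrix with respect to some natural basis is diagonal with all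
diagonal entries nonzero (i.e. there is a natural basis `c` with
`c_i c_i = a_i • c_i`, `a_i ≠ 0`, for every `i`). -/
theorem evolution_algebra_has_unit_iff_diagonal
    {K : Type*} [Field K] {E : Type*} [NonUnitalNonAssocRing E]
    [Module K E] [SMulCommClass K E E] [IsScalarTower K E E]
    {n : ℕ} (b : Module.Basis (Fin n) K E)
    (hb : ∀ i j : Fin n, i ≠ j → b i * b j = 0) :
    (∃ u : E, ∀ x : E, u * x = x ∧ x * u = x) ↔
      ∃ c : Module.Basis (Fin n) K E,
        (∀ i j : Fin n, i ≠ j → c i * c j = 0) ∧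
        ∀ i : Fin n, ∃ a : K, a ≠ 0 ∧ c i * c i = a • c i := by
  constructor
  · rintro ⟨u, hu⟩
    refine ⟨b, hb, fun i => ?_⟩
    have h1 : u * b i = b i := (hu (b i)).1
    have h2 : u * b i = b.repr u i • (b i * b i) := by
      conv_lhs => rw [← b.sum_repr u]
      rw [Finset.sum_mul, Finset.sum_eq_single i]
      · rw [smul_mul_assoc]
      · intro k _ hk
        rw [smul_mul_assoc, hb k i hk, smul_zero]
      · intro h; exact absurd (Finset.mem_univ i) h
    have hne : b.repr u i ≠ 0 := by
      intro h0
      rw [h2, h0, zero_smul] at h1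
      exact b.ne_zero i h1.symm
    refine ⟨(b.repr u i)⁻¹, inv_ne_zero hne, ?_⟩
    have h3 : b.repr u i • (b i * b i) = b i := h2.symm.trans h1
    calc b i * b i = (b.repr u i)⁻¹ • (b.repr u i • (b i * b i)) := by
          rw [smul_smul, inv_mul_cancel₀ hne, one_smul]
      _ = (b.repr u i)⁻¹ • b i := by rw [h3]
  · rintro ⟨c, hc, hd⟩
    choose a ha hsq using hd
    set u : E := ∑ i, (a i)⁻¹ • c i with hu
    have key : ∀ j, u * c j = c j := by
      intro j
      rw [hu, Finset.sum_mul, Finset.sum_eq_single j]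
      · rw [smul_mul_assoc, hsq j, smul_smul, inv_mul_cancel₀ (ha j), one_smul]
      · intro k _ hk
        rw [smul_mul_assoc, hc k j hk, smul_zero]
      · intro h; exact absurd (Finset.mem_univ j) h
    have key' : ∀ j, c j * u = c j := by
      intro j
      rw [hu, Finset.mul_sum, Finset.sum_eq_single j]
      · rw [mul_smul_comm, hsq j, smul_smul, inv_mul_cancel₀ (ha j), one_smul]
      · intro k _ hk
        rw [mul_smul_comm, hc j k (Ne.symm hk), smul_zero]
      · intro h; exact absurd (Finset.mem_univ j) h
    refine ⟨u, fun x => ?_⟩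
    constructor
    · have : LinearMap.mulLeft K u = LinearMap.id := by
        apply c.ext
        intro j
        simpa using key j
      simpa using LinearMap.congr_fun this x
    · have : LinearMap.mulRight K u = LinearMap.id := by
        apply c.ext
        intro j
        simpa using key' j
      simpa using LinearMap.congr_fun this x
end

section
/- If the structure matrix of an n-dimensional complex evolution algebra E with respect to a natural basis is nonsingular, then the only derivation of E is the zero map. -/
/-- If the structure matrix of an `n`-dimensional complex evolution algebra
with respect to a natural basis is nonsingular, then the only derivation of
the algebra is the zero map. -/
theorem evolution_algebra_nonsingular_derivation_zero
    {E : Type*} [NonUnitalNonAssocRing E]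
    [Module ℂ E] [SMulCommClass ℂ E E] [IsScalarTower ℂ E E]
    {n : ℕ} (b : Module.Basis (Fin n) ℂ E)
    (hb : ∀ i j : Fin n, i ≠ j → b i * b j = 0)
    (P : Matrix (Fin n) (Fin n) ℂ)
    (hp : ∀ i : Fin n, b i * b i = ∑ k, P i k • b k)
    (hdet : P.det ≠ 0)
    (d : E →ₗ[ℂ] E)
    (hd : ∀ x y : E, d (x * y) = d x * y + x * d y) :
    d = 0 := by
  classical
  set D : Matrix (Fin n) (Fin n) ℂ := fun i k => b.repr (d (b i)) k with hDdef
  have hdb : ∀ i, d (b i) = ∑ k, D i k • b k := fun i => (b.sum_repr (d (b i))).symm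
  have hli := Fintype.linearIndependent_iff.mp b.linearIndependent
  -- left multiplication identity
  have e1 : ∀ i j : Fin n, d (b i) * b j = D i j • (b j * b j) := by
    intro i j
    rw [hdb i, Finset.sum_mul]
    rw [Finset.sum_eq_single j]
    · rw [smul_mul_assoc]
    · intro k _ hk
      rw [smul_mul_assoc, hb k j hk, smul_zero]
    · intro h; exact absurd (Finset.mem_univ j) h
  have e2 : ∀ i j : Fin n, b i * d (b j) = D j i • (b i * b i) := by
    intro i j
    rw [hdb j, Finset.mul_sum]
    rw [Finset.sum_eq_single i]
    · rw [mul_smul_comm]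
    · intro k _ hk
      rw [mul_smul_comm, hb i k (Ne.symm hk), smul_zero]
    · intro h; exact absurd (Finset.mem_univ i) h
  -- key identity for i ≠ j
  have key1 : ∀ i j : Fin n, i ≠ j → ∀ k, D i j * P j k + D j i * P i k = 0 := by
    intro i j hij
    have h0 : ∑ k, (D i j * P j k + D j i * P i k) • b k = 0 := by
      have : d (b i * b j) = 0 := by rw [hb i j hij, map_zero]
      calc ∑ k, (D i j * P j k + D j i * P i k) • b k
          = D i j • (b j * b j) + D j i • (b i * b i) := by
            rw [hp i, hp j, Finset.smul_sum, Finset.smul_sum,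
              ← Finset.sum_add_distrib]
            refine Finset.sum_congr rfl fun k _ => ?_
            rw [add_smul, mul_smul, mul_smul]
        _ = d (b i) * b j + b i * d (b j) := by rw [e1, e2]
        _ = d (b i * b j) := (hd _ _).symm
        _ = 0 := this
    exact hli _ h0
  -- diagonal identity
  have key2 : ∀ i l : Fin n, ∑ k, P i k * D k l = 2 * D i i * P i l := by
    intro i l
    have h0 : ∑ k, ((∑ m, P i m * D m k) - 2 * D i i * P i k) • b k = 0 := by
      have hL : d (b i * b i) = ∑ k, (∑ m, P i m * D m k) • b k := by
        rw [hp i, map_sum]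
        have hterm : ∀ m : Fin n, d (P i m • b m) = ∑ k, (P i m * D m k) • b k := by
          intro m
          rw [map_smul, hdb m, Finset.smul_sum]
          exact Finset.sum_congr rfl fun k _ => smul_smul _ _ _
        rw [Finset.sum_congr rfl fun m (_ : m ∈ Finset.univ) => hterm m,
          Finset.sum_comm]
        exact Finset.sum_congr rfl fun k _ => (Finset.sum_smul).symm
      have hR : d (b i * b i) = ∑ k, (2 * D i i * P i k) • b k := by
        rw [hd, e1, e2, ← add_smul, hp i, Finset.smul_sum]
        refine Finset.sum_congr rfl fun k _ => ?_
        rw [smul_smul]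
        ring_nf
      rw [Finset.sum_congr rfl fun k (_ : k ∈ Finset.univ) => sub_smul _ _ (b k),
        Finset.sum_sub_distrib, ← hL, ← hR, sub_self]
    exact sub_eq_zero.mp (hli _ h0 l)
  -- P is invertible
  have hPu : IsUnit P.det := isUnit_iff_ne_zero.mpr hdet
  have hPQ : P * P⁻¹ = 1 := Matrix.mul_nonsing_inv P hPu
  -- off-diagonal entries of D vanish
  have Doff : ∀ i j : Fin n, i ≠ j → D i j = 0 := by
    intro i j hij
    set x : Fin n → ℂ := fun k => if k = i then D j i else if k = j then D i j else 0
      with hxdef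
    have hx : Matrix.vecMul x P = 0 := by
      funext l
      show ∑ k, x k * P k l = 0
      rw [Finset.sum_eq_add_of_mem i j (Finset.mem_univ i) (Finset.mem_univ j) hij]
      · have hxi : x i = D j i := by simp [hxdef]
        have hxj : x j = D i j := by simp [hxdef, hij.symm]
        rw [hxi, hxj]
        have := key1 i j hij l
        linear_combination this
      · intro c _ hc
        simp [hxdef, hc.1, hc.2]
    have hx0 : x = 0 := by
      have : Matrix.vecMul (Matrix.vecMul x P) P⁻¹ = Matrix.vecMul x (P * P⁻¹) :=
        Matrix.vecMul_vecMul x P P⁻¹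
      rw [hx, Matrix.zero_vecMul, hPQ, Matrix.vecMul_one] at this
      exact this.symm
    have := congrFun hx0 j
    simpa [hxdef, hij.symm] using this
  -- diagonal entries vanish
  have Ddiag : ∀ i : Fin n, D i i = 0 := by
    -- for each i there is l with P i l ≠ 0, and then D l l = 2 * D i i
    have hrow : ∀ i : Fin n, ∃ l, P i l ≠ 0 := by
      intro i
      by_contra h
      push_neg at h
      exact hdet (Matrix.det_eq_zero_of_row_eq_zero i h)
    have hstep : ∀ i l : Fin n, P i l ≠ 0 → D l l = 2 * D i i := by
      intro i l hPil
      have h2 := key2 i l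
      rw [Finset.sum_eq_single l] at h2
      · have : P i l * D l l = 2 * D i i * P i l := h2
        field_simp at this
        rcases mul_eq_mul_right_iff.mp (by linear_combination P i l * this :
          D l l * P i l = (2 * D i i) * P i l) with h | h
        · exact h
        · exact absurd h hPil
      · intro k _ hk
        rw [Doff k l hk, mul_zero]
      · intro h; exact absurd (Finset.mem_univ l) h
    intro i
    -- take the index with maximal |D m m|
    obtain ⟨m, -, hm⟩ := Finset.exists_max_image Finset.univ
      (fun j => ‖D j j‖) ⟨i, Finset.mem_univ i⟩
    obtain ⟨l, hl⟩ := hrow m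
    have h2 : D l l = 2 * D m m := hstep m l hl
    have habs : ‖D l l‖ = 2 * ‖D m m‖ := by
      rw [h2, norm_mul]
      norm_num
    have hle := hm l (Finset.mem_univ l)
    have hm0 : ‖D m m‖ = 0 := by
      simp only [habs] at hle
      have := norm_nonneg (D m m)
      linarith
    have hi := hm i (Finset.mem_univ i)
    rw [hm0] at hi
    exact norm_eq_zero.mp (le_antisymm hi (norm_nonneg _))
  -- conclude
  have hD0 : ∀ i k, D i k = 0 := by
    intro i k
    by_cases h : i = k
    · subst h; exact Ddiag i
    · exact Doff i k h
  refine b.ext fun i => ?_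
  rw [hdb i]
  simp [hD0]
end

section
/- A linear map d on an evolution algebra E, given by d(e_i) = Σ_k d_{ik} e_k on a natural basis, is a derivation if and only if p_{ik} d_{ji} + p_{jk} d_{ij} = 0 for all i ≠ j and all k, and Σ_k p_{ik} d_{kj} = 2 p_{ij} d_{ii} for all i, j. -/
/-- A linear map `d` on an evolution algebra, given on a natural basis by
`d(e_i) = ∑_k d_{ik} e_k`, is a derivation if and only if
`p_{ik} d_{ji} + p_{jk} d_{ij} = 0` for all `i ≠ j` and all `k`, and
`∑_k p_{ik} d_{kj} = 2 p_{ij} d_{ii}` for all `i, j`. -/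
theorem evolution_algebra_derivation_iff_equations
    {K : Type*} [Field K] {E : Type*} [NonUnitalNonAssocRing E]
    [Module K E] [SMulCommClass K E E] [IsScalarTower K E E]
    {n : ℕ} (b : Module.Basis (Fin n) K E)
    (hb : ∀ i j : Fin n, i ≠ j → b i * b j = 0)
    (p : Fin n → Fin n → K)
    (hp : ∀ i : Fin n, b i * b i = ∑ k, p i k • b k)
    (dmat : Fin n → Fin n → K)
    (d : E →ₗ[K] E)
    (hd : ∀ i : Fin n, d (b i) = ∑ k, dmat i k • b k) :
    (∀ x y : E, d (x * y) = d x * y + x * d y) ↔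
      ((∀ i j k : Fin n, i ≠ j → p i k * dmat j i + p j k * dmat i j = 0) ∧
        ∀ i j : Fin n, ∑ k, p i k * dmat k j = 2 * p i j * dmat i i) := by
  -- coefficient comparison lemma
  have coeff : ∀ f g : Fin n → K, (∑ k, f k • b k) = (∑ k, g k • b k) ↔ ∀ k, f k = g k := by
    intro f g
    constructor
    · intro h k
      have h1 : (b.repr (∑ k, f k • b k) : Fin n → K) = b.repr (∑ k, g k • b k) := by rw [h]
      rw [b.repr_sum_self, b.repr_sum_self] at h1
      exact congrFun h1 k
    · intro h
      exact Finset.sum_congr rfl (fun k _ => by rw [h k])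
  -- reduce derivation property to basis pairs
  have key : (∀ x y : E, d (x * y) = d x * y + x * d y) ↔
      ∀ i j : Fin n, d (b i * b j) = d (b i) * b j + b i * d (b j) := by
    constructor
    · intro h i j; exact h _ _
    · intro h
      have hmaps : (LinearMap.mul K E).compr₂ d =
          ((LinearMap.mul K E).comp d + (LinearMap.mul K E).compl₂ d) := by
        apply LinearMap.ext_basis b b
        intro i j
        simpa using h i j
      intro x y
      have := LinearMap.congr_fun (LinearMap.congr_fun hmaps x) y
      simpa using this
  rw [key]
  -- compute RHS of basis pair equation for i ≠ j
  have off : ∀ i j : Fin n, i ≠ j →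
      (d (b i * b j) = d (b i) * b j + b i * d (b j) ↔
        ∀ k, (0 : K) = p i k * dmat j i + p j k * dmat i j) := by
    intro i j hij
    have lhs0 : d (b i * b j) = ∑ k, (0 : K) • b k := by
      rw [hb i j hij, map_zero]
      simp
    have rhs : d (b i) * b j + b i * d (b j)
        = ∑ k, (p i k * dmat j i + p j k * dmat i j) • b k := by
      rw [hd i, hd j, Finset.sum_mul, Finset.mul_sum]
      have h1 : ∀ k : Fin n, (dmat i k • b k) * b j = (if k = j then dmat i j • (b j * b j) else 0) := by
        intro k
        by_cases hk : k = j
        · subst hk; simp [smul_mul_assoc]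
        · simp [hk, smul_mul_assoc, hb k j hk]
      have h2 : ∀ k : Fin n, b i * (dmat j k • b k) = (if k = i then dmat j i • (b i * b i) else 0) := by
        intro k
        by_cases hk : k = i
        · subst hk; simp [mul_smul_comm]
        · simp [hk, mul_smul_comm, hb i k (Ne.symm hk)]
      rw [Finset.sum_congr rfl (fun k _ => h1 k), Finset.sum_congr rfl (fun k _ => h2 k)]
      rw [Finset.sum_ite_eq' Finset.univ j, Finset.sum_ite_eq' Finset.univ i]
      simp only [Finset.mem_univ, if_true]
      rw [hp i, hp j, Finset.smul_sum, Finset.smul_sum, ← Finset.sum_add_distrib]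
      refine Finset.sum_congr rfl (fun k _ => ?_)
      rw [smul_smul, smul_smul, ← add_smul]
      congr 1; ring
    rw [lhs0, rhs, coeff]
  -- compute basis pair equation for i = i
  have diag : ∀ i : Fin n,
      (d (b i * b i) = d (b i) * b i + b i * d (b i) ↔
        ∀ j, (∑ k, p i k * dmat k j) = 2 * p i j * dmat i i) := by
    intro i
    have lhs : d (b i * b i) = ∑ j, (∑ k, p i k * dmat k j) • b j := by
      rw [hp i, map_sum]
      simp_rw [map_smul, hd, Finset.smul_sum, smul_smul]
      rw [Finset.sum_comm]
      simp_rw [Finset.sum_smul]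
    have rhs : d (b i) * b i + b i * d (b i) = ∑ j, (2 * p i j * dmat i i) • b j := by
      rw [hd i, Finset.sum_mul, Finset.mul_sum]
      have h1 : ∀ k : Fin n, (dmat i k • b k) * b i = (if k = i then dmat i i • (b i * b i) else 0) := by
        intro k
        by_cases hk : k = i
        · subst hk; simp [smul_mul_assoc]
        · simp [hk, smul_mul_assoc, hb k i hk]
      have h2 : ∀ k : Fin n, b i * (dmat i k • b k) = (if k = i then dmat i i • (b i * b i) else 0) := by
        intro k
        by_cases hk : k = i
        · subst hk; simp [mul_smul_comm]
        · simp [hk, mul_smul_comm, hb i k (Ne.symm hk)]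
      rw [Finset.sum_congr rfl (fun k _ => h1 k), Finset.sum_congr rfl (fun k _ => h2 k)]
      rw [Finset.sum_ite_eq' Finset.univ i]
      simp only [Finset.mem_univ, if_true]
      rw [hp i, Finset.smul_sum, ← Finset.sum_add_distrib]
      refine Finset.sum_congr rfl (fun j _ => ?_)
      rw [smul_smul, ← add_smul]
      congr 1; ring
    rw [lhs, rhs, coeff]
  constructor
  · intro h
    refine ⟨fun i j k hij => ((off i j hij).mp (h i j) k).symm, fun i j => (diag i).mp (h i i) j⟩
  · rintro ⟨h1, h2⟩ i j
    by_cases hij : i = j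
    · subst hij; exact (diag i).mpr (h2 i)
    · exact (off i j hij).mpr (fun k => (h1 i j k hij).symm)
end

section
/- If E is a perfect evolution algebra (E² = E), then E has a unique natural basis up to reordering and rescaling by nonzero scalars. -/
section

variable {K : Type*} [Field K] {E : Type*} [NonUnitalNonAssocRing E]
  [Module K E] [SMulCommClass K E E] [IsScalarTower K E E]

/-- A perfect evolution algebra (`E² = E`) has a unique natural basis up to
reordering and rescaling by nonzero scalars. -/
theorem perfect_evolution_algebra_unique_natural_basis
    {n : ℕ} (b : Module.Basis (Fin n) K E)
    (hb : ∀ i j : Fin n, i ≠ j → b i * b j = 0)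
    (hperf : pairMul (⊤ : Submodule K E) ⊤ = ⊤) :
    ∀ c : Module.Basis (Fin n) K E, (∀ i j : Fin n, i ≠ j → c i * c j = 0) →
      ∃ (σ : Equiv.Perm (Fin n)) (lam : Fin n → K),
        (∀ i, lam i ≠ 0) ∧ ∀ i, c i = lam i • b (σ i) := by
  classical
  intro c hc
  -- the "diagonal" family
  set d : Fin n → E := fun k => b k * b k with hd
  -- product formula: any product collapses to the diagonal
  have key : ∀ x y : E, x * y = ∑ k, (b.repr x k * b.repr y k) • d k := by
    intro x y
    conv_lhs => rw [← b.sum_repr x, ← b.sum_repr y]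
    rw [Finset.sum_mul]
    refine Finset.sum_congr rfl fun k _ => ?_
    rw [Finset.mul_sum]
    rw [Finset.sum_eq_single k]
    · rw [smul_mul_assoc, mul_smul_comm, smul_smul]
    · intro l _ hl
      rw [smul_mul_assoc, mul_smul_comm, hb k l (Ne.symm hl), smul_zero, smul_zero]
    · intro h; exact absurd (Finset.mem_univ k) h
  -- the diagonal spans E
  have hspan : ⊤ ≤ Submodule.span K (Set.range d) := by
    rw [← hperf, pairMul]
    refine Submodule.span_le.mpr ?_
    rintro z ⟨x, -, y, -, rfl⟩
    rw [key x y]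
    exact Submodule.sum_mem _ fun k _ =>
      Submodule.smul_mem _ _ (Submodule.subset_span ⟨k, rfl⟩)
  have : Module.Finite K E := Module.Finite.of_basis b
  have hfr : Fintype.card (Fin n) = Module.finrank K E := by
    simp [Module.finrank_eq_card_basis b]
  have hli : LinearIndependent K d :=
    linearIndependent_of_top_le_span_of_card_eq_finrank hspan hfr
  -- orthogonality of coefficient rows
  have horth : ∀ i j : Fin n, i ≠ j → ∀ k, b.repr (c i) k * b.repr (c j) k = 0 := by
    intro i j hij
    have h0 : ∑ k, (b.repr (c i) k * b.repr (c j) k) • d k = 0 := by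
      rw [← key, hc i j hij]
    exact Fintype.linearIndependent_iff.mp hli _ h0
  -- pick a column in the support of each row
  have hne : ∀ i, ∃ k, b.repr (c i) k ≠ 0 := by
    intro i
    by_contra h
    push_neg at h
    have : b.repr (c i) = 0 := Finsupp.ext h
    exact c.ne_zero i (b.repr.map_eq_zero_iff.mp this)
  choose p hp using hne
  have hpinj : Function.Injective p := by
    intro i j hij
    by_contra hne'
    exact mul_ne_zero (hp i) (hij ▸ hp j) (horth i j hne' (p i))
  -- each row is supported only at `p i`
  have hzero : ∀ i k, k ≠ p i → b.repr (c i) k = 0 := by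
    intro i k hk
    obtain ⟨j, rfl⟩ := (Finite.injective_iff_surjective.mp hpinj) k
    have hij : i ≠ j := fun h => hk (by rw [h])
    by_contra h
    exact mul_ne_zero h (hp j) (horth i j hij (p j))
  refine ⟨Equiv.ofBijective p (Finite.injective_iff_bijective.mp hpinj),
    fun i => b.repr (c i) (p i), hp, fun i => ?_⟩
  have := b.sum_repr (c i)
  rw [Finset.sum_eq_single (p i)] at this
  · exact this.symm
  · intro k _ hk
    rw [hzero i k hk, zero_smul]
  · intro h; exact absurd (Finset.mem_univ (p i)) h

end
end

section
/- Every nonzero ideal of a perfect finite-dimensional evolution algebra is a basic ideal, i.e., it admits a natural basis that extends to a natural basis of the whole algebra. -/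
section

variable {K : Type*} [Field K] {E : Type*} [NonUnitalNonAssocRing E]
  [Module K E] [SMulCommClass K E E] [IsScalarTower K E E]

/-- Every nonzero ideal of a perfect finite-dimensional evolution algebra is a
basic ideal: it is spanned by a subset of some natural basis of the whole
algebra (so it has a natural basis extending to a natural basis of `E`). -/
theorem perfect_evolution_algebra_ideal_basic
    {n : ℕ} (b : Module.Basis (Fin n) K E)
    (hb : ∀ i j : Fin n, i ≠ j → b i * b j = 0)
    (hperf : pairMul (⊤ : Submodule K E) ⊤ = ⊤)
    (I : Submodule K E)
    (hI : ∀ x ∈ I, ∀ y : E, x * y ∈ I ∧ y * x ∈ I)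
    (hne : I ≠ ⊥) :
    ∃ (c : Module.Basis (Fin n) K E) (S : Set (Fin n)),
      (∀ i j : Fin n, i ≠ j → c i * c j = 0) ∧
      I = Submodule.span K (c '' S) := by
  classical
  haveI : FiniteDimensional K E := Module.Finite.of_basis b
  set sq : Fin n → E := fun i => b i * b i with hsq
  -- key computation: b k * y = (repr y k) • sq k
  have hmul : ∀ (k : Fin n) (y : E), b k * y = b.repr y k • sq k := by
    intro k y
    conv_lhs => rw [← b.sum_repr y]
    rw [Finset.mul_sum]
    rw [Finset.sum_eq_single k]
    · rw [mul_smul_comm]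
    · intro j _ hj
      rw [mul_smul_comm, hb k j (Ne.symm hj), smul_zero]
    · intro h; exact absurd (Finset.mem_univ k) h
  -- the squares span E
  have hsq_span : (⊤ : Submodule K E) ≤ Submodule.span K (Set.range sq) := by
    rw [← hperf, pairMul, Submodule.span_le]
    rintro z ⟨x, -, y, -, rfl⟩
    rw [show x * y = ∑ i, b.repr x i • b i * y by rw [← Finset.sum_mul, b.sum_repr x],
      ]
    refine Submodule.sum_mem _ fun i _ => ?_
    rw [smul_mul_assoc, hmul i y]
    exact Submodule.smul_mem _ _ (Submodule.smul_mem _ _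
      (Submodule.subset_span ⟨i, rfl⟩))
  have hcard : Fintype.card (Fin n) = Module.finrank K E := by
    rw [Module.finrank_eq_card_basis b]
  have hli : LinearIndependent K sq :=
    linearIndependent_of_top_le_span_of_card_eq_finrank hsq_span hcard
  -- the support set
  set D : Set (Fin n) := {i | ∃ x ∈ I, b.repr x i ≠ 0} with hD
  haveI : Fintype D := Fintype.ofFinite D
  -- squares of indices in D belong to I
  have hsqI : ∀ k ∈ D, sq k ∈ I := by
    rintro k ⟨x, hx, hxk⟩
    have h1 : b k * x ∈ I := (hI x hx (b k)).2
    rw [hmul k x] at h1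
    have := Submodule.smul_mem I (b.repr x k)⁻¹ h1
    rwa [inv_smul_smul₀ hxk] at this
  have h1 : Submodule.span K (sq '' D) ≤ I := by
    rw [Submodule.span_le]
    rintro z ⟨k, hk, rfl⟩
    exact hsqI k hk
  have h2 : I ≤ Submodule.span K (b '' D) := by
    intro x hx
    refine Submodule.span_mono (Set.image_mono ?_) (b.mem_span_repr_support x)
    intro i hi
    exact ⟨x, hx, Finsupp.mem_support_iff.mp hi⟩
  -- finrank computations
  have hr1 : Module.finrank K (Submodule.span K (sq '' D)) = Fintype.card D := by
    rw [Set.image_eq_range]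
    exact finrank_span_eq_card (hli.comp Subtype.val Subtype.val_injective)
  have hr2 : Module.finrank K (Submodule.span K (b '' D)) = Fintype.card D := by
    rw [Set.image_eq_range]
    exact finrank_span_eq_card (b.linearIndependent.comp Subtype.val Subtype.val_injective)
  refine ⟨b, D, hb, ?_⟩
  refine Submodule.eq_of_le_of_finrank_le h2 ?_
  rw [hr2]
  rw [← hr1]
  exact Submodule.finrank_mono h1
end
end

section
/- Let E be an evolution algebra with trivial annihilator, attached to a natural basis with structure matrix (p_{ik}), and let G be the directed graph with vertices {1,...,n} and an arc (i,k) whenever p_{ik} ≠ 0. Then the underlying graph of G is connected if and only if E does not decompose as a direct sum of two nonzero ideals. -/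
open Finset

section Aux

variable {K : Type*} [Field K] {E : Type*} [NonUnitalNonAssocRing E]
    [Module K E] [SMulCommClass K E E] [IsScalarTower K E E] {n : ℕ}

/-- Product formula in an evolution algebra: only diagonal terms survive. -/
theorem evo_mul_eq (b : Module.Basis (Fin n) K E)
    (hb : ∀ i j : Fin n, i ≠ j → b i * b j = 0) (x y : E) :
    x * y = ∑ j, (b.repr x j * b.repr y j) • (b j * b j) := by
  calc x * y = ∑ i, ∑ j, (b.repr x i * b.repr y j) • (b i * b j) := by
        conv_lhs => rw [← b.sum_repr x, ← b.sum_repr y]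
        rw [Finset.sum_mul_sum]
        exact Finset.sum_congr rfl fun i _ => Finset.sum_congr rfl fun j _ => by
          rw [smul_mul_assoc, mul_smul_comm, smul_smul]
    _ = ∑ j, (b.repr x j * b.repr y j) • (b j * b j) :=
        Finset.sum_congr rfl fun i _ => Finset.sum_eq_single i
          (fun j _ hj => by rw [hb i j (Ne.symm hj), smul_zero])
          (fun h => absurd (Finset.mem_univ i) h)

/-- Each basis square is nonzero when the annihilator is trivial. -/
theorem evo_sq_ne (b : Module.Basis (Fin n) K E)
    (hb : ∀ i j : Fin n, i ≠ j → b i * b j = 0)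
    (hann : ∀ x : E, (∀ y : E, x * y = 0 ∧ y * x = 0) → x = 0) (j : Fin n) :
    b j * b j ≠ 0 := by
  classical
  intro h
  refine b.ne_zero j (hann _ fun y => ⟨?_, ?_⟩)
  · rw [evo_mul_eq b hb]
    refine Finset.sum_eq_zero fun m _ => ?_
    by_cases hm : m = j
    · subst hm; rw [h, smul_zero]
    · rw [b.repr_self_apply]
      simp [Ne.symm hm]
  · rw [evo_mul_eq b hb]
    refine Finset.sum_eq_zero fun m _ => ?_
    by_cases hm : m = j
    · subst hm; rw [h, smul_zero]
    · rw [b.repr_self_apply]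
      simp [Ne.symm hm]

end Aux

/-- Let `E` be an evolution algebra with trivial annihilator, with natural
basis `{e_1,…,e_n}` and structure matrix `(p_{ik})`, and let `G` be the graph
underlying the directed graph with an arc `(i,k)` whenever `p_{ik} ≠ 0`.
Then `G` is connected if and only if `E` does not decompose as a direct sum
of two nonzero ideals. -/
theorem evolution_algebra_graph_connected_iff_indecomposable
    {K : Type*} [Field K] {E : Type*} [NonUnitalNonAssocRing E]
    [Module K E] [SMulCommClass K E E] [IsScalarTower K E E]
    {n : ℕ} (hn : 0 < n) (b : Module.Basis (Fin n) K E)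
    (hb : ∀ i j : Fin n, i ≠ j → b i * b j = 0)
    (p : Fin n → Fin n → K)
    (hp : ∀ i : Fin n, b i * b i = ∑ k, p i k • b k)
    (hann : ∀ x : E, (∀ y : E, x * y = 0 ∧ y * x = 0) → x = 0) :
    (SimpleGraph.fromRel fun i k : Fin n => p i k ≠ 0).Connected ↔
      ¬ ∃ I J : Submodule K E,
          (∀ x ∈ I, ∀ y : E, x * y ∈ I ∧ y * x ∈ I) ∧
          (∀ x ∈ J, ∀ y : E, x * y ∈ J ∧ y * x ∈ J) ∧
          I ≠ ⊥ ∧ J ≠ ⊥ ∧ I ⊓ J = ⊥ ∧ I ⊔ J = ⊤ := by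
  classical
  have mul_eq := evo_mul_eq b hb
  have sq_ne : ∀ j, b j * b j ≠ 0 := evo_sq_ne b hb hann
  set G := SimpleGraph.fromRel fun i k : Fin n => p i k ≠ 0 with hGdef
  constructor
  · -- connected → indecomposable
    rintro hconn ⟨I, J, hI, hJ, hIne, hJne, hinf, hsup⟩
    have disj : ∀ i, b i ∈ I → b i ∈ J → False := by
      intro i h1 h2
      have hm : b i ∈ I ⊓ J := ⟨h1, h2⟩
      rw [hinf, Submodule.mem_bot] at hm
      exact b.ne_zero i hm
    -- every basis vector lies in I or J
    have memIJ : ∀ i, b i ∈ I ∨ b i ∈ J := by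
      intro i
      have htop : b i ∈ I ⊔ J := by rw [hsup]; exact Submodule.mem_top
      obtain ⟨u, hu, v, hv, huv⟩ := Submodule.mem_sup.1 htop
      have hrepr0 : ∀ j, j ≠ i → b.repr u j = 0 := by
        intro j hj
        have h1 : u * b j ∈ I := (hI u hu (b j)).1
        have hadd : u * b j + v * b j = 0 := by
          rw [← add_mul, huv, hb i j (Ne.symm hj)]
        have h2 : u * b j ∈ J := by
          rw [eq_neg_of_add_eq_zero_left hadd]
          exact Submodule.neg_mem _ (hJ v hv (b j)).1
        have hz : u * b j = 0 := by
          have hm : u * b j ∈ I ⊓ J := ⟨h1, h2⟩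
          rwa [hinf, Submodule.mem_bot] at hm
        have hcalc : u * b j = b.repr u j • (b j * b j) := by
          rw [mul_eq u (b j)]
          refine (Finset.sum_eq_single j
            (fun m _ hm => by rw [b.repr_self_apply]; simp [Ne.symm hm])
            (fun h => absurd (Finset.mem_univ j) h)).trans ?_
          rw [b.repr_self_apply]; simp
        rw [hcalc] at hz
        exact (smul_eq_zero.1 hz).resolve_right (sq_ne j)
      obtain ⟨a, hua⟩ : ∃ a : K, u = a • b i := by
        refine ⟨b.repr u i, ?_⟩
        conv_lhs => rw [← b.sum_repr u]
        exact Finset.sum_eq_single i (fun j _ hj => by rw [hrepr0 j hj, zero_smul])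
          (fun h => absurd (Finset.mem_univ i) h)
      have hva : v = (1 - a) • b i := by
        rw [sub_smul, one_smul, ← hua, eq_sub_iff_add_eq, add_comm]; exact huv
      have huvz : u * v = 0 := by
        have hm : u * v ∈ I ⊓ J := ⟨(hI u hu v).1, (hJ v hv u).2⟩
        rwa [hinf, Submodule.mem_bot] at hm
      have hprod : (a * (1 - a)) • (b i * b i) = 0 := by
        rw [← huvz, hua, hva, smul_mul_assoc, mul_smul_comm, smul_smul]
      rcases mul_eq_zero.1 ((smul_eq_zero.1 hprod).resolve_right (sq_ne i)) with h0 | h0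
      · right
        have : u = 0 := by rw [hua, h0, zero_smul]
        rw [← huv, this, zero_add]; exact hv
      · left
        have : v = 0 := by rw [hva, h0, zero_smul]
        rw [← huv, this, add_zero]; exact hu
    -- closure of an ideal's basis-index set under arrows
    have key : ∀ W W' : Submodule K E,
        (∀ x ∈ W, ∀ y : E, x * y ∈ W ∧ y * x ∈ W) → W ⊓ W' = ⊥ →
        (∀ m, b m ∈ W ∨ b m ∈ W') →
        ∀ i k, b i ∈ W → p i k ≠ 0 → b k ∈ W := by
      intro W W' hW hWinf hcov i k hiW hpik
      by_contra hkW
      have hz : (b i * b i) ∈ W := (hW _ hiW _).1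
      rw [hp i] at hz
      have hsplit := Finset.sum_filter_add_sum_filter_not Finset.univ
        (fun m => b m ∈ W) (fun m => p i m • b m)
      have hin : ∑ m ∈ Finset.univ.filter (fun m => b m ∈ W), p i m • b m ∈ W :=
        Submodule.sum_mem _ fun m hm =>
          Submodule.smul_mem _ _ (Finset.mem_filter.1 hm).2
      have hrest' : ∑ m ∈ Finset.univ.filter (fun m => ¬ b m ∈ W), p i m • b m ∈ W' :=
        Submodule.sum_mem _ fun m hm =>
          Submodule.smul_mem _ _ ((hcov m).resolve_left (Finset.mem_filter.1 hm).2)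
      have hrestW : ∑ m ∈ Finset.univ.filter (fun m => ¬ b m ∈ W), p i m • b m ∈ W := by
        have : ∑ m ∈ Finset.univ.filter (fun m => ¬ b m ∈ W), p i m • b m
            = (∑ m, p i m • b m) - ∑ m ∈ Finset.univ.filter (fun m => b m ∈ W), p i m • b m := by
          rw [← hsplit]; abel
        rw [this]
        exact Submodule.sub_mem _ hz hin
      have hzero : ∑ m ∈ Finset.univ.filter (fun m => ¬ b m ∈ W), p i m • b m = 0 := by
        have hm : _ ∈ W ⊓ W' := ⟨hrestW, hrest'⟩
        rwa [hWinf, Submodule.mem_bot] at hm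
      have hli := linearIndependent_iff'.1 b.linearIndependent
        (Finset.univ.filter (fun m => ¬ b m ∈ W)) (p i) hzero k
        (Finset.mem_filter.2 ⟨Finset.mem_univ k, hkW⟩)
      exact hpik hli
    have stepI : ∀ i k, b i ∈ I → p i k ≠ 0 → b k ∈ I := key I J hI hinf memIJ
    have stepJ : ∀ i k, b i ∈ J → p i k ≠ 0 → b k ∈ J :=
      key J I hJ (by rw [inf_comm]; exact hinf) (fun m => (memIJ m).symm)
    have adj_closed : ∀ i j, G.Adj i j → b i ∈ I → b j ∈ I := by
      intro i j hadj hiI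
      rw [hGdef, SimpleGraph.fromRel_adj] at hadj
      obtain ⟨hne, h | h⟩ := hadj
      · exact stepI i j hiI h
      · rcases memIJ j with hj | hj
        · exact hj
        · exact absurd (stepJ j i hj h) fun hiJ => disj i hiI hiJ
    have reach : ∀ i j, G.Reachable i j → b i ∈ I → b j ∈ I := by
      intro i j hr
      obtain ⟨w⟩ := hr
      induction w with
      | nil => exact id
      | cons h q ih => exact fun hi => ih (adj_closed _ _ h hi)
    obtain ⟨i0, hi0⟩ : ∃ i, b i ∈ I := by
      by_contra hno
      push_neg at hno
      have htop : (⊤ : Submodule K E) ≤ J := by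
        rw [← b.span_eq]
        refine Submodule.span_le.2 ?_
        rintro _ ⟨m, rfl⟩
        exact (memIJ m).resolve_left (hno m)
      have hIJ : I ≤ J := le_top.trans htop
      exact hIne ((inf_eq_left.mpr hIJ).symm.trans hinf)
    obtain ⟨k0, hk0⟩ : ∃ k, ¬ b k ∈ I := by
      by_contra hno
      push_neg at hno
      have htop : (⊤ : Submodule K E) ≤ I := by
        rw [← b.span_eq]
        refine Submodule.span_le.2 ?_
        rintro _ ⟨m, rfl⟩
        exact hno m
      have hJI : J ≤ I := le_top.trans htop
      exact hJne ((inf_eq_right.mpr hJI).symm.trans hinf)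
    exact hk0 (reach i0 k0 (hconn.preconnected i0 k0) hi0)
  · -- indecomposable → connected
    intro hnd
    by_contra hnc
    apply hnd
    have hnonempty : Nonempty (Fin n) := ⟨⟨0, hn⟩⟩
    obtain ⟨u0, v0, huv⟩ : ∃ u v, ¬ G.Reachable u v := by
      by_contra h
      push_neg at h
      exact hnc ⟨h⟩
    set A : Set (Fin n) := {m | G.Reachable u0 m} with hAdef
    -- ideal property for spans of arrow-closed sets of basis vectors
    have ideal_of : ∀ S : Set (Fin n), (∀ j ∈ S, ∀ k, p j k ≠ 0 → k ∈ S) →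
        ∀ x ∈ Submodule.span K (b '' S), ∀ y : E,
          x * y ∈ Submodule.span K (b '' S) ∧ y * x ∈ Submodule.span K (b '' S) := by
      intro S hS x hx y
      have hxr : ∀ j, j ∉ S → b.repr x j = 0 := by
        intro j hj
        by_contra h
        exact hj (b.mem_span_image.1 hx (by simpa using Finsupp.mem_support_iff.2 h))
      have hsq : ∀ j ∈ S, b j * b j ∈ Submodule.span K (b '' S) := by
        intro j hjS
        rw [hp j]
        refine Submodule.sum_mem _ fun k _ => ?_
        by_cases hk : p j k = 0
        · rw [hk, zero_smul]; exact Submodule.zero_mem _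
        · exact Submodule.smul_mem _ _ (Submodule.subset_span ⟨k, hS j hjS k hk, rfl⟩)
      constructor
      · rw [mul_eq x y]
        refine Submodule.sum_mem _ fun j _ => ?_
        by_cases hj : j ∈ S
        · exact Submodule.smul_mem _ _ (hsq j hj)
        · rw [hxr j hj, zero_mul, zero_smul]; exact Submodule.zero_mem _
      · rw [mul_eq y x]
        refine Submodule.sum_mem _ fun j _ => ?_
        by_cases hj : j ∈ S
        · exact Submodule.smul_mem _ _ (hsq j hj)
        · rw [hxr j hj, mul_zero, zero_smul]; exact Submodule.zero_mem _
    have hA : ∀ j ∈ A, ∀ k, p j k ≠ 0 → k ∈ A := by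
      intro j hj k hk
      by_cases hjk : j = k
      · exact hjk ▸ hj
      · exact hj.trans (SimpleGraph.Adj.reachable
          (by rw [hGdef, SimpleGraph.fromRel_adj]; exact ⟨hjk, Or.inl hk⟩))
    have hAc : ∀ j ∈ Aᶜ, ∀ k, p j k ≠ 0 → k ∈ Aᶜ := by
      intro j hj k hk hkA
      by_cases hjk : j = k
      · exact hj (hjk ▸ hkA)
      · exact hj (hkA.trans (SimpleGraph.Adj.reachable
          (by rw [hGdef, SimpleGraph.fromRel_adj]
              exact ⟨fun h => hjk h.symm, Or.inr hk⟩)))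
    refine ⟨Submodule.span K (b '' A), Submodule.span K (b '' Aᶜ),
      fun x hx y => ideal_of A hA x hx y, fun x hx y => ideal_of Aᶜ hAc x hx y,
      ?_, ?_, ?_, ?_⟩
    · intro hbot
      have hmem : b u0 ∈ Submodule.span K (b '' A) :=
        Submodule.subset_span ⟨u0, SimpleGraph.Reachable.refl u0, rfl⟩
      rw [hbot, Submodule.mem_bot] at hmem
      exact b.ne_zero u0 hmem
    · intro hbot
      have hmem : b v0 ∈ Submodule.span K (b '' Aᶜ) :=
        Submodule.subset_span ⟨v0, huv, rfl⟩
      rw [hbot, Submodule.mem_bot] at hmem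
      exact b.ne_zero v0 hmem
    · rw [eq_bot_iff]
      rintro x ⟨hx1, hx2⟩
      have h1 := b.mem_span_image.1 hx1
      have h2 := b.mem_span_image.1 hx2
      have hz : b.repr x = 0 := by
        ext j
        by_contra h
        have hj1 : j ∈ A := h1 (by simpa using Finsupp.mem_support_iff.2 h)
        have hj2 : j ∈ Aᶜ := h2 (by simpa using Finsupp.mem_support_iff.2 h)
        exact hj2 hj1
      rw [Submodule.mem_bot]
      exact b.repr.map_eq_zero_iff.1 hz
    · rw [← Submodule.span_union, ← Set.image_union, Set.union_compl_self,
        Set.image_univ, b.span_eq]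
end

section
/- A finite-dimensional evolution algebra E is nil if and only if its attached directed graph contains no directed (oriented) cycle. -/
section

variable {K : Type*} [Field K] {E : Type*} [NonUnitalNonAssocRing E]
  [Module K E] [SMulCommClass K E E] [IsScalarTower K E E]

lemma ppw_aux_mul_eq {n : ℕ} (b : Module.Basis (Fin n) K E)
    (hb : ∀ i j : Fin n, i ≠ j → b i * b j = 0) (y x : E) :
    y * x = ∑ i, ((b.repr y i) * (b.repr x i)) • (b i * b i) := by
  conv_lhs => rw [← b.sum_repr y, ← b.sum_repr x]
  rw [Finset.sum_mul_sum]
  rw [Finset.sum_comm]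
  refine Finset.sum_congr rfl fun i _ => ?_
  rw [Finset.sum_eq_single i]
  · rw [smul_mul_smul_comm]
  · intro j _ hj
    rw [mul_smul_comm, smul_mul_assoc, hb j i hj, smul_zero, smul_zero]
  · simp

/-- Coordinates of a product in an evolution algebra. -/
lemma ppw_aux_repr_mul {n : ℕ} (b : Module.Basis (Fin n) K E)
    (hb : ∀ i j : Fin n, i ≠ j → b i * b j = 0)
    (p : Fin n → Fin n → K)
    (hp : ∀ i : Fin n, b i * b i = ∑ k, p i k • b k) (y x : E) (j : Fin n) :
    b.repr (y * x) j = ∑ i, b.repr y i * b.repr x i * p i j := by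
  rw [ppw_aux_mul_eq b hb y x]
  simp only [hp, map_sum, map_smul, Module.Basis.repr_self, Finsupp.coe_finset_sum,
    Finsupp.coe_smul, Finset.sum_apply, Pi.smul_apply, Finsupp.single_apply,
    smul_eq_mul, mul_ite, mul_one, mul_zero]
  refine Finset.sum_congr rfl fun i _ => ?_
  rw [Finset.sum_ite_eq' Finset.univ j (p i ·)]
  simp [mul_assoc]

/-- If a coordinate of a principal power is nonzero, there is a directed path of
that length ending at that vertex. -/
lemma ppw_aux_path {n : ℕ} (b : Module.Basis (Fin n) K E)
    (hb : ∀ i j : Fin n, i ≠ j → b i * b j = 0)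
    (p : Fin n → Fin n → K)
    (hp : ∀ i : Fin n, b i * b i = ∑ k, p i k • b k) (x : E) :
    ∀ k (j : Fin n), b.repr (ppw x k) j ≠ 0 →
      ∃ c : ℕ → Fin n, c k = j ∧ ∀ t < k, p (c t) (c (t + 1)) ≠ 0 := by
  intro k
  induction k with
  | zero => intro j _; exact ⟨fun _ => j, rfl, fun t ht => absurd ht (Nat.not_lt_zero t)⟩
  | succ k ih =>
    intro j hj
    rw [show ppw x (k+1) = ppw x k * x from rfl, ppw_aux_repr_mul b hb p hp] at hj
    obtain ⟨i, -, hi⟩ := Finset.exists_ne_zero_of_sum_ne_zero hj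
    have h1 : b.repr (ppw x k) i ≠ 0 := fun h => hi (by simp [h])
    have h2 : p i j ≠ 0 := fun h => hi (by simp [h])
    obtain ⟨c, hck, hce⟩ := ih i h1
    refine ⟨fun t => if t ≤ k then c t else j, by simp, fun t ht => ?_⟩
    rcases Nat.lt_succ_iff_lt_or_eq.mp ht with ht | rfl
    · simpa [Nat.le_of_lt ht, Nat.succ_le_of_lt ht] using hce t ht
    · simpa [hck] using h2

lemma ppw_aux_succ_mod_inj {m a t : ℕ} (ha : a < m) (ht : t < m)
    (h : (t + 1) % m = (a + 1) % m) : t = a := by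
  rcases Nat.lt_or_ge (t+1) m with h1 | h1 <;> rcases Nat.lt_or_ge (a+1) m with h2 | h2
  · rw [Nat.mod_eq_of_lt h1, Nat.mod_eq_of_lt h2] at h; omega
  · rw [Nat.mod_eq_of_lt h1, show a+1 = m by omega, Nat.mod_self] at h; omega
  · rw [Nat.mod_eq_of_lt h2, show t+1 = m by omega, Nat.mod_self] at h; omega
  · omega

/-- If the attached graph contains a directed cycle, the algebra is not nil. -/
lemma ppw_aux_forward {n : ℕ} (b : Module.Basis (Fin n) K E)
    (hb : ∀ i j : Fin n, i ≠ j → b i * b j = 0)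
    (p : Fin n → Fin n → K)
    (hp : ∀ i : Fin n, b i * b i = ∑ k, p i k • b k)
    (hnil : ∀ x : E, ∃ m : ℕ, ppw x m = 0)
    (hcyc : ∃ (m : ℕ) (c : ℕ → Fin n), 0 < m ∧ c m = c 0 ∧
          ∀ t < m, p (c t) (c (t + 1)) ≠ 0) : False := by
  classical
  set Q : ℕ → Prop := fun k => ∃ c : ℕ → Fin n, 0 < k ∧ c k = c 0 ∧
      ∀ t < k, p (c t) (c (t + 1)) ≠ 0 with hQ
  have hex : ∃ k, Q k := by
    obtain ⟨m, c, hm, hc, he⟩ := hcyc; exact ⟨m, c, hm, hc, he⟩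
  obtain ⟨m₀, hspec, hmin⟩ : ∃ m₀, Q m₀ ∧ ∀ k, Q k → m₀ ≤ k :=
    ⟨Nat.find hex, Nat.find_spec hex, fun k => Nat.find_min' hex⟩
  obtain ⟨c, hm₀, hc, he⟩ := hspec
  -- vertices of the minimal cycle are pairwise distinct
  have hinjA : ∀ s t, s < t → t ≤ m₀ → c s = c t → s = 0 ∧ t = m₀ := by
    intro s t hst htm hcst
    have hQ' : Q (t - s) := by
      refine ⟨fun u => c (s + u), by omega, ?_, fun u hu => ?_⟩
      · simp only [Nat.add_sub_cancel' hst.le, Nat.add_zero, hcst]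
      · have := he (s + u) (by omega)
        simpa [Nat.add_assoc] using this
    have := hmin _ hQ'
    omega
  have hcinj : ∀ s t, s < m₀ → t < m₀ → c s = c t → s = t := by
    intro s t hs ht hcst
    rcases lt_trichotomy s t with h | h | h
    · have := hinjA s t h ht.le hcst; omega
    · exact h
    · have := hinjA t s h hs.le hcst.symm; omega
  -- edges of the cycle, cyclically
  have hedge : ∀ a, a < m₀ → p (c a) (c ((a + 1) % m₀)) ≠ 0 := by
    intro a ha
    rcases Nat.lt_or_ge (a + 1) m₀ with h | h
    · rw [Nat.mod_eq_of_lt h]; exact he a ha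
    · have h1 : a + 1 = m₀ := by omega
      rw [h1, Nat.mod_self, ← hc, ← h1]
      exact he a ha
  -- a minimal cycle has no chords
  have hchord : ∀ t s, t < m₀ → s < m₀ → p (c t) (c s) ≠ 0 → s = (t + 1) % m₀ := by
    intro t s ht hs hpts
    set d := (t + m₀ - s) % m₀ with hd_def
    have hd : d < m₀ := Nat.mod_lt _ hm₀
    have hsd : (s + d) % m₀ = t := by
      rw [hd_def, Nat.add_mod_mod, show s + (t + m₀ - s) = t + m₀ by omega,
        Nat.add_mod_right, Nat.mod_eq_of_lt ht]
    have hQ' : Q (d + 1) := by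
      refine ⟨fun u => if u ≤ d then c ((s + u) % m₀) else c s, Nat.succ_pos d, ?_, ?_⟩
      · simp [Nat.mod_eq_of_lt hs]
      · intro u hu
        beta_reduce
        rcases Nat.lt_or_ge u d with h | h
        · have h1 : u ≤ d := h.le
          have h2 : u + 1 ≤ d := h
          simp only [h1, h2, if_true]
          rw [show (s + (u+1)) % m₀ = ((s + u) % m₀ + 1) % m₀ by
            rw [Nat.mod_add_mod, Nat.add_assoc]]
          exact hedge _ (Nat.mod_lt _ hm₀)
        · have h1 : u = d := by omega
          subst h1
          rw [if_pos (le_refl d), if_neg (by omega), hsd]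
          exact hpts
    have h2 := hmin _ hQ'
    have hd1 : d = m₀ - 1 := by omega
    have : (t + 1) % m₀ = s := by
      rw [← hsd, Nat.mod_add_mod, show s + d + 1 = s + m₀ by omega,
        Nat.add_mod_right, Nat.mod_eq_of_lt hs]
    exact this.symm
  -- the witness element: the sum of the basis vectors along the cycle
  set x : E := ∑ t ∈ Finset.range m₀, b (c t) with hx_def
  have hx1 : ∀ a, a < m₀ → b.repr x (c a) = 1 := by
    intro a ha
    rw [hx_def, map_sum]
    rw [Finsupp.coe_finset_sum, Finset.sum_apply]
    rw [Finset.sum_eq_single_of_mem a (Finset.mem_range.2 ha)]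
    · simp
    · intro t htm hta
      have : c t ≠ c a := fun h => hta (hcinj t a (Finset.mem_range.1 htm) ha h)
      simp [Module.Basis.repr_self, Finsupp.single_apply, this]
  have hx2 : ∀ i : Fin n, b.repr x i ≠ 0 → ∃ t, t < m₀ ∧ c t = i := by
    intro i hi
    by_contra hcon
    push_neg at hcon
    apply hi
    rw [hx_def, map_sum, Finsupp.coe_finset_sum, Finset.sum_apply]
    apply Finset.sum_eq_zero
    intro t htm
    simp [Module.Basis.repr_self, Finsupp.single_apply, hcon t (Finset.mem_range.1 htm)]
  -- no principal power of x vanishes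
  have main : ∀ k, b.repr (ppw x k) (c (k % m₀)) ≠ 0 := by
    intro k
    induction k with
    | zero =>
      rw [show ppw x 0 = x from rfl, Nat.zero_mod, hx1 0 hm₀]
      exact one_ne_zero
    | succ k ih =>
      rw [show ppw x (k+1) = ppw x k * x from rfl, ppw_aux_repr_mul b hb p hp]
      rw [Finset.sum_eq_single (c (k % m₀))]
      · rw [hx1 _ (Nat.mod_lt _ hm₀), mul_one]
        refine mul_ne_zero ih ?_
        rw [show (k + 1) % m₀ = (k % m₀ + 1) % m₀ by rw [Nat.mod_add_mod]]
        exact hedge _ (Nat.mod_lt _ hm₀)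
      · intro i _ hne
        by_cases hzx : b.repr x i = 0
        · simp [hzx]
        by_cases hpij : p i (c ((k + 1) % m₀)) = 0
        · simp [hpij]
        exfalso
        obtain ⟨t, htm, rfl⟩ := hx2 i hzx
        have h1 : (k + 1) % m₀ = (t + 1) % m₀ :=
          hchord t _ htm (Nat.mod_lt _ hm₀) hpij
        have h2 : (k + 1) % m₀ = (k % m₀ + 1) % m₀ := by rw [Nat.mod_add_mod]
        have := ppw_aux_succ_mod_inj (Nat.mod_lt k hm₀) htm (h1.symm.trans h2)
        exact hne (by rw [this])
      · intro h; exact absurd (Finset.mem_univ _) h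
  obtain ⟨m', hm'⟩ := hnil x
  exact main m' (by rw [hm']; simp)

/-- A finite-dimensional evolution algebra is nil (every element has some
vanishing principal power) if and only if its attached directed graph — with
vertices `{1,…,n}` and an arc from `i` to `k` whenever `p_{ik} ≠ 0` — contains
no directed cycle. -/
theorem evolution_algebra_nil_iff_no_directed_cycle
    {n : ℕ} (b : Module.Basis (Fin n) K E)
    (hb : ∀ i j : Fin n, i ≠ j → b i * b j = 0)
    (p : Fin n → Fin n → K)
    (hp : ∀ i : Fin n, b i * b i = ∑ k, p i k • b k) :
    (∀ x : E, ∃ m : ℕ, ppw x m = 0) ↔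
      ¬ ∃ (m : ℕ) (c : ℕ → Fin n), 0 < m ∧ c m = c 0 ∧
          ∀ t < m, p (c t) (c (t + 1)) ≠ 0 := by
  constructor
  · intro hnil hcyc
    exact ppw_aux_forward b hb p hp hnil hcyc
  · intro hno x
    refine ⟨n, ?_⟩
    by_contra hx
    have : ∃ j, b.repr (ppw x n) j ≠ 0 := by
      by_contra h
      push_neg at h
      exact hx (b.repr.injective (by ext j; simpa using h j))
    obtain ⟨j, hj⟩ := this
    obtain ⟨c, -, hce⟩ := ppw_aux_path b hb p hp x n j hj
    have : ¬ Function.Injective (fun t : Fin (n+1) => c t) := by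
      intro hinj
      have := Fintype.card_le_of_injective _ hinj
      simp at this
    rw [Function.not_injective_iff] at this
    obtain ⟨s, t, hst, hne⟩ := this
    rcases lt_or_gt_of_ne hne with h | h
    · exact hno ⟨(t : ℕ) - s, fun u => c (s + u), by omega,
        by simp [Nat.add_sub_cancel' (le_of_lt h), hst],
        fun u hu => by
          have : (s : ℕ) + u < n := by omega
          simpa [Nat.add_assoc] using hce _ this⟩
    · exact hno ⟨(s : ℕ) - t, fun u => c (t + u), by omega,
        by simp [Nat.add_sub_cancel' (le_of_lt h), hst],
        fun u hu => by
          have : (t : ℕ) + u < n := by omega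
          simpa [Nat.add_assoc] using hce _ this⟩

end
end
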